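/- arXiv:2309.01514 — 4 statements merged into one kernel-verified Lean document; each statement's English description precedes it below -/
import Mathlib

section
/- Assume (A0) and (A1). Then no positive solution x of equation (*) satisfies lim_{t→∞} x(t) = 0, and no positive solution satisfies lim_{t→∞} x(t) = ∞. -/
open Real Filter MeasureTheory Set
open Topology

noncomputable section

/-- A positive (admissible) solution of the nonautonomous Nicholson equation (*)
`x'(t) = ∑ j, p j t * x (t - τd j t) * exp (-(a j t * x (t - σd j t))) - δ t * x t`,
considered for `t ≥ 0`, with nonnegative continuous initial data on `[-τ, 0)` and `x 0 > 0`. -/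
def IsPosSol (m : ℕ) (p a : Fin m → ℝ → ℝ) (δ : ℝ → ℝ)
    (τd σd : Fin m → ℝ → ℝ) (τ : ℝ) (x : ℝ → ℝ) : Prop :=
  ContinuousOn x (Ici (-τ)) ∧
  (∀ θ ∈ Ico (-τ) (0:ℝ), 0 ≤ x θ) ∧ 0 < x 0 ∧
  ∀ t ≥ (0:ℝ), HasDerivWithinAt x
      ((∑ j, p j t * x (t - τd j t) * Real.exp (-(a j t * x (t - σd j t)))) - δ t * x t)
      (Ici 0) t

/-- Hypothesis (A0): the coefficients `p j, a j, δ` are continuous and positive on `[0,∞)`;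
the delays `τd j, σd j` are continuous, nonnegative and bounded; and each `a j` is bounded
below and above by positive constants. -/
def HypA0 (m : ℕ) (p a : Fin m → ℝ → ℝ) (δ : ℝ → ℝ)
    (τd σd : Fin m → ℝ → ℝ) : Prop :=
  (∀ j, ContinuousOn (p j) (Ici 0) ∧ ∀ t ≥ (0:ℝ), 0 < p j t) ∧
  (∀ j, ContinuousOn (a j) (Ici 0) ∧
      ∃ c C : ℝ, 0 < c ∧ ∀ t ≥ (0:ℝ), c ≤ a j t ∧ a j t ≤ C) ∧
  (ContinuousOn δ (Ici 0) ∧ ∀ t ≥ (0:ℝ), 0 < δ t) ∧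
  (∀ j, ContinuousOn (τd j) (Ici 0) ∧ ContinuousOn (σd j) (Ici 0) ∧
      (∀ t ≥ (0:ℝ), 0 ≤ τd j t ∧ 0 ≤ σd j t) ∧
      ∃ B : ℝ, ∀ t ≥ (0:ℝ), τd j t ≤ B ∧ σd j t ≤ B)

/-- `τ = max_j max (sup_t τd j t, sup_t σd j t)`: the supremum of all the delays. -/
def IsMaxDelay (m : ℕ) (τd σd : Fin m → ℝ → ℝ) (τ : ℝ) : Prop :=
  IsLUB {r : ℝ | ∃ j : Fin m, ∃ t : ℝ, 0 ≤ t ∧ (r = τd j t ∨ r = σd j t)} τ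

/-- Hypothesis (A1): `liminf_{t→∞} p(t)/δ(t) > 1` and `limsup_{t→∞} p(t)/δ(t) < ∞`. -/
def HypA1 (m : ℕ) (p : Fin m → ℝ → ℝ) (δ : ℝ → ℝ) : Prop :=
  1 < Filter.liminf (fun t => (∑ j, p j t) / δ t) Filter.atTop ∧
  Filter.IsBoundedUnder (· ≤ ·) Filter.atTop (fun t => (∑ j, p j t) / δ t)

/-- Hypothesis (A2): `limsup_{t→∞} ∫_{t-τ}^t p(s) ds < ∞`. -/
def HypA2 (m : ℕ) (p : Fin m → ℝ → ℝ) (τ : ℝ) : Prop :=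
  Filter.IsBoundedUnder (· ≤ ·) Filter.atTop (fun t => ∫ s in t - τ..t, (∑ j, p j s))

/-- Hypothesis (A3): `∫_0^∞ δ(s) ds = ∞`. -/
def HypA3 (δ : ℝ → ℝ) : Prop :=
  Filter.Tendsto (fun t => ∫ s in (0:ℝ)..t, δ s) Filter.atTop Filter.atTop


private lemma slope_deriv_nonpos {x : ℝ → ℝ} {t d : ℝ} (ht : 0 < t)
    (hd : HasDerivAt x d t) (hmin : ∀ s ∈ Icc (0:ℝ) t, x t ≤ x s) : d ≤ 0 := by
  have h1 : Tendsto (slope x t) (𝓝[<] t) (𝓝 d) :=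
    (hasDerivAt_iff_tendsto_slope.1 hd).mono_left
      (nhdsWithin_mono t fun s hs => ne_of_lt hs)
  refine le_of_tendsto h1 ?_
  filter_upwards [Ioo_mem_nhdsLT_of_mem (show t ∈ Ioc (0:ℝ) t from ⟨ht, le_rfl⟩)] with s hs
  have hxs : x t ≤ x s := hmin s ⟨hs.1.le, hs.2.le⟩
  rw [slope_def_field]
  exact div_nonpos_of_nonneg_of_nonpos (by linarith) (by linarith [hs.2])

private lemma slope_deriv_nonneg {x : ℝ → ℝ} {t d : ℝ} (ht : 0 < t)
    (hd : HasDerivAt x d t) (hmax : ∀ s ∈ Icc (0:ℝ) t, x s ≤ x t) : 0 ≤ d := by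
  have h1 : Tendsto (slope x t) (𝓝[<] t) (𝓝 d) :=
    (hasDerivAt_iff_tendsto_slope.1 hd).mono_left
      (nhdsWithin_mono t fun s hs => ne_of_lt hs)
  refine ge_of_tendsto h1 ?_
  filter_upwards [Ioo_mem_nhdsLT_of_mem (show t ∈ Ioc (0:ℝ) t from ⟨ht, le_rfl⟩)] with s hs
  have hxs : x s ≤ x t := hmax s ⟨hs.1.le, hs.2.le⟩
  rw [slope_def_field]
  exact div_nonneg_of_nonpos (by linarith) (by linarith [hs.2])

private lemma exists_running_min {x : ℝ → ℝ} (hc : ContinuousOn x (Ici (0:ℝ)))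
    (h0 : Tendsto x atTop (𝓝 0)) (hpos : ∀ t ≥ (0:ℝ), 0 < x t) (T : ℝ) :
    ∃ t, T < t ∧ ∀ s ∈ Icc (0:ℝ) t, x t ≤ x s := by
  obtain ⟨u, hu, humin⟩ := isCompact_Icc.exists_isMinOn
    (nonempty_Icc.2 (le_max_right T 0)) (hc.mono fun s hs => hs.1)
  have hxu : 0 < x u := hpos u hu.1
  obtain ⟨T1, hT1⟩ := eventually_atTop.1 (h0.eventually (gt_mem_nhds hxu))
  have hxs0 : x (max T1 (max T 0 + 1)) < x u := hT1 _ (le_max_left _ _)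
  have hs0T : max T 0 < max T1 (max T 0 + 1) :=
    lt_of_lt_of_le (lt_add_one _) (le_max_right _ _)
  have h0s0 : (0:ℝ) ≤ max T1 (max T 0 + 1) := le_trans (le_max_right T 0) hs0T.le
  obtain ⟨v, hv, hvmin⟩ := isCompact_Icc.exists_isMinOn
    (nonempty_Icc.2 h0s0) (hc.mono fun s hs => hs.1)
  have hvT : max T 0 < v := by
    by_contra h
    push_neg at h
    have h1 : x v ≤ x (max T1 (max T 0 + 1)) := isMinOn_iff.1 hvmin _ ⟨h0s0, le_rfl⟩
    have h2 : x u ≤ x v := isMinOn_iff.1 humin v ⟨hv.1, h⟩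
    linarith
  exact ⟨v, lt_of_le_of_lt (le_max_left T 0) hvT,
    fun s hs => isMinOn_iff.1 hvmin s ⟨hs.1, le_trans hs.2 hv.2⟩⟩

private lemma exists_running_max {x : ℝ → ℝ} (hc : ContinuousOn x (Ici (0:ℝ)))
    (hinf : Tendsto x atTop atTop) (T : ℝ) :
    ∃ t, T < t ∧ ∀ s ∈ Icc (0:ℝ) t, x s ≤ x t := by
  obtain ⟨u, hu, humax⟩ := isCompact_Icc.exists_isMaxOn
    (nonempty_Icc.2 (le_max_right T 0)) (hc.mono fun s hs => hs.1)
  obtain ⟨T1, hT1⟩ := eventually_atTop.1 (hinf.eventually_gt_atTop (x u))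
  have hxs0 : x u < x (max T1 (max T 0 + 1)) := hT1 _ (le_max_left _ _)
  have hs0T : max T 0 < max T1 (max T 0 + 1) :=
    lt_of_lt_of_le (lt_add_one _) (le_max_right _ _)
  have h0s0 : (0:ℝ) ≤ max T1 (max T 0 + 1) := le_trans (le_max_right T 0) hs0T.le
  obtain ⟨v, hv, hvmax⟩ := isCompact_Icc.exists_isMaxOn
    (nonempty_Icc.2 h0s0) (hc.mono fun s hs => hs.1)
  have hvT : max T 0 < v := by
    by_contra h
    push_neg at h
    have h1 : x (max T1 (max T 0 + 1)) ≤ x v := isMaxOn_iff.1 hvmax _ ⟨h0s0, le_rfl⟩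
    have h2 : x v ≤ x u := isMaxOn_iff.1 humax v ⟨hv.1, h⟩
    linarith
  exact ⟨v, lt_of_le_of_lt (le_max_left T 0) hvT,
    fun s hs => isMaxOn_iff.1 hvmax s ⟨hs.1, le_trans hs.2 hv.2⟩⟩

private lemma sol_pos (m : ℕ) (p a : Fin m → ℝ → ℝ) (δ : ℝ → ℝ)
    (τd σd : Fin m → ℝ → ℝ) (τ : ℝ)
    (hA0 : HypA0 m p a δ τd σd)
    (hτub : ∀ j, ∀ t ≥ (0:ℝ), τd j t ≤ τ ∧ σd j t ≤ τ)
    (hτ0 : 0 ≤ τ)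
    (x : ℝ → ℝ) (hx : IsPosSol m p a δ τd σd τ x) :
    ∀ t ≥ (0:ℝ), 0 < x t := by
  obtain ⟨hcx, hinit, hx0, hder⟩ := hx
  by_contra hcon
  push_neg at hcon
  obtain ⟨t1, ht1, hxt1⟩ := hcon
  set S : Set ℝ := {t | t ∈ Ici (0:ℝ) ∧ x t ≤ 0} with hSdef
  have hSne : S.Nonempty := ⟨t1, ht1, hxt1⟩
  have hconIci : ContinuousOn x (Ici (0:ℝ)) := hcx.mono (Ici_subset_Ici.2 (by linarith))
  have hScl : IsClosed S := by
    have h : IsClosed (Ici (0:ℝ) ∩ x ⁻¹' Iic 0) :=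
      hconIci.preimage_isClosed_of_isClosed isClosed_Ici isClosed_Iic
    convert h using 1
    rfl
  have hbdd : BddBelow S := ⟨0, fun s hs => hs.1⟩
  set t0 := sInf S with ht0def
  have ht0S : t0 ∈ S := hScl.csInf_mem hSne hbdd
  have ht00 : 0 ≤ t0 := ht0S.1
  have hxt0 : x t0 ≤ 0 := ht0S.2
  have ht0pos : 0 < t0 := by
    rcases ht00.lt_or_eq with h | h
    · exact h
    · exfalso; rw [← h] at hxt0; linarith
  have hlow : ∀ s, 0 ≤ s → s < t0 → 0 < x s := by
    intro s hs0 hst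
    by_contra h
    push_neg at h
    exact absurd (csInf_le hbdd ⟨hs0, h⟩) (not_le.2 hst)
  have hnonneg : ∀ s, -τ ≤ s → s < t0 → 0 ≤ x s := by
    intro s hs hst
    rcases lt_or_ge s 0 with h | h
    · exact hinit s ⟨hs, h⟩
    · exact (hlow s h hst).le
  obtain ⟨u, hu, hDmax⟩ := isCompact_Icc.exists_isMaxOn
    (nonempty_Icc.2 ht00) ((hA0.2.2.1.1).mono (fun s hs => hs.1))
  have hDpos : 0 < δ u := hA0.2.2.1.2 u hu.1
  set y : ℝ → ℝ := fun t => x t * Real.exp (δ u * t) with hydef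
  have hIccsub : Icc (0:ℝ) t0 ⊆ Ici (-τ) := fun s hs => le_trans (by linarith) hs.1
  have hmono : MonotoneOn y (Icc 0 t0) := by
    apply monotoneOn_of_deriv_nonneg (convex_Icc 0 t0)
    · exact (hcx.mono hIccsub).mul
        ((Real.continuous_exp.comp (continuous_const.mul continuous_id)).continuousOn)
    · intro t ht
      rw [interior_Icc] at ht
      have hdx : HasDerivAt x
          ((∑ j, p j t * x (t - τd j t) * Real.exp (-(a j t * x (t - σd j t)))) - δ t * x t) t :=
        (hder t ht.1.le).hasDerivAt (Ici_mem_nhds ht.1)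
      have hde : HasDerivAt (fun s => Real.exp (δ u * s)) (Real.exp (δ u * t) * δ u) t := by
        simpa using ((hasDerivAt_id t).const_mul (δ u)).exp
      exact (hdx.mul hde).differentiableAt.differentiableWithinAt
    · intro t ht
      rw [interior_Icc] at ht
      set E := (∑ j, p j t * x (t - τd j t) * Real.exp (-(a j t * x (t - σd j t)))) - δ t * x t
        with hEdef
      have hdx : HasDerivAt x E t := (hder t ht.1.le).hasDerivAt (Ici_mem_nhds ht.1)
      have hde : HasDerivAt (fun s => Real.exp (δ u * s)) (Real.exp (δ u * t) * δ u) t := by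
        simpa using ((hasDerivAt_id t).const_mul (δ u)).exp
      have hdy : HasDerivAt y (E * Real.exp (δ u * t) + x t * (Real.exp (δ u * t) * δ u)) t :=
        hdx.mul hde
      rw [hdy.deriv]
      have hsumnn : 0 ≤ ∑ j, p j t * x (t - τd j t) * Real.exp (-(a j t * x (t - σd j t))) := by
        apply Finset.sum_nonneg
        intro j _
        have hτj := hτub j t ht.1.le
        have hτdnn := (hA0.2.2.2 j).2.2.1 t ht.1.le
        have hxarg : 0 ≤ x (t - τd j t) :=
          hnonneg _ (by linarith [hτj.1, ht.1]) (by linarith [hτdnn.1, ht.2])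
        exact mul_nonneg (mul_nonneg ((hA0.1 j).2 t ht.1.le).le hxarg) (Real.exp_pos _).le
      have hδle : δ t ≤ δ u := isMaxOn_iff.1 hDmax t ⟨ht.1.le, ht.2.le⟩
      have hxtnn : 0 ≤ x t := (hlow t ht.1.le ht.2).le
      have hkey : 0 ≤ E + δ u * x t := by
        rw [hEdef]
        nlinarith [hsumnn, mul_le_mul_of_nonneg_right hδle hxtnn]
      nlinarith [Real.exp_pos (δ u * t), mul_nonneg hkey (Real.exp_pos (δ u * t)).le]
  have h1 : y 0 ≤ y t0 := hmono ⟨le_rfl, ht00⟩ ⟨ht00, le_rfl⟩ ht00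
  have h2 : y 0 = x 0 := by simp [hydef]
  have h3 : y t0 ≤ 0 := mul_nonpos_of_nonpos_of_nonneg hxt0 (Real.exp_pos _).le
  linarith

/-- Under (A0) and (A1), no positive solution of (*) tends to `0`
and no positive solution tends to `∞`. -/
theorem no_extinction_no_blowup
    (m : ℕ) (hm : 0 < m) (p a : Fin m → ℝ → ℝ) (δ : ℝ → ℝ)
    (τd σd : Fin m → ℝ → ℝ) (τ : ℝ)
    (hA0 : HypA0 m p a δ τd σd) (hτ : IsMaxDelay m τd σd τ)
    (hA1 : HypA1 m p δ)
    (x : ℝ → ℝ) (hx : IsPosSol m p a δ τd σd τ x) :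
    ¬ Filter.Tendsto x Filter.atTop (nhds 0) ∧
      ¬ Filter.Tendsto x Filter.atTop Filter.atTop := by
  have hτub : ∀ j, ∀ t ≥ (0:ℝ), τd j t ≤ τ ∧ σd j t ≤ τ := fun j t ht =>
    ⟨hτ.1 ⟨j, t, ht, Or.inl rfl⟩, hτ.1 ⟨j, t, ht, Or.inr rfl⟩⟩
  have j0 : Fin m := ⟨0, hm⟩
  have hτ0 : 0 ≤ τ :=
    le_trans ((hA0.2.2.2 j0).2.2.1 0 le_rfl).1 (hτub j0 0 le_rfl).1
  have hpos : ∀ t ≥ (0:ℝ), 0 < x t := sol_pos m p a δ τd σd τ hA0 hτub hτ0 x hx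
  obtain ⟨hcx, hinit, hx0, hder⟩ := hx
  have hconIci : ContinuousOn x (Ici (0:ℝ)) := hcx.mono (Ici_subset_Ici.2 (by linarith))
  have hδpos : ∀ t ≥ (0:ℝ), 0 < δ t := hA0.2.2.1.2
  have hppos : ∀ j, ∀ t ≥ (0:ℝ), 0 < p j t := fun j => (hA0.1 j).2
  -- bounds on a
  have ha' := fun j => (hA0.2.1 j).2
  choose c C hc0 hcC using ha'
  have hCj : ∀ j, 0 < C j := fun j =>
    lt_of_lt_of_le (hc0 j) (le_trans (hcC j 0 le_rfl).1 (hcC j 0 le_rfl).2)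
  set Cm : ℝ := ∑ j, C j with hCmdef
  have hCmpos : 0 < Cm := Finset.sum_pos (fun j _ => hCj j) ⟨j0, Finset.mem_univ j0⟩
  have hCmle : ∀ j, C j ≤ Cm := fun j =>
    Finset.single_le_sum (fun i _ => (hCj i).le) (Finset.mem_univ j)
  haveI : Nonempty (Fin m) := ⟨j0⟩
  set cm : ℝ := Finset.univ.inf' Finset.univ_nonempty c with hcmdef
  have hcmpos : 0 < cm := (Finset.lt_inf'_iff _).2 fun j _ => hc0 j
  have hcmle : ∀ j, cm ≤ c j := fun j => Finset.inf'_le _ (Finset.mem_univ j)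
  -- eventual lower bound on p/δ
  set L := Filter.liminf (fun t => (∑ j, p j t) / δ t) Filter.atTop with hLdef
  have hL1 : 1 < L := hA1.1
  have hbd : Filter.IsBoundedUnder (· ≥ ·) Filter.atTop (fun t => (∑ j, p j t) / δ t) := by
    refine ⟨0, eventually_map.2 (eventually_atTop.2 ⟨0, fun t ht => ?_⟩)⟩
    exact div_nonneg (Finset.sum_nonneg fun j _ => (hppos j t ht).le) (hδpos t ht).le
  set r := (1 + L) / 2 with hrdef
  have hr1 : 1 < r := by rw [hrdef]; linarith
  have hrL : r < L := by rw [hrdef]; linarith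
  have hev_r : ∀ᶠ t in atTop, r < (∑ j, p j t) / δ t := eventually_lt_of_lt_liminf hrL hbd
  constructor
  · -- no extinction
    intro h0
    set η := Real.log r / 2 with hηdef
    have hlogr : 0 < Real.log r := Real.log_pos hr1
    have hηpos : 0 < η := by rw [hηdef]; linarith
    have hkey : 1 < Real.exp (-η) * r := by
      have h1 : Real.exp (-η) * r = Real.exp (-η + Real.log r) := by
        rw [Real.exp_add, Real.exp_log (by linarith : (0:ℝ) < r)]
      rw [h1, Real.one_lt_exp_iff, hηdef]; linarith
    obtain ⟨T1, hT1⟩ := eventually_atTop.1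
      (h0.eventually (gt_mem_nhds (show (0:ℝ) < η / Cm by positivity)))
    obtain ⟨T0, hT0⟩ := eventually_atTop.1 hev_r
    obtain ⟨t, htT, hmin⟩ := exists_running_min hconIci h0 hpos (max (max T0 (T1 + τ)) (τ + 1))
    have httau : τ + 1 ≤ t := le_of_lt (lt_of_le_of_lt (le_max_right _ _) htT)
    have htT0 : T0 ≤ t :=
      le_of_lt (lt_of_le_of_lt (le_trans (le_max_left T0 (T1 + τ)) (le_max_left _ _)) htT)
    have htT1 : T1 + τ ≤ t :=
      le_of_lt (lt_of_le_of_lt (le_trans (le_max_right T0 (T1 + τ)) (le_max_left _ _)) htT)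
    have ht0 : 0 < t := by linarith
    have hxt : 0 < x t := hpos t ht0.le
    have hδt : 0 < δ t := hδpos t ht0.le
    set E := (∑ j, p j t * x (t - τd j t) * Real.exp (-(a j t * x (t - σd j t)))) - δ t * x t
      with hEdef
    have hdx : HasDerivAt x E t := (hder t ht0.le).hasDerivAt (Ici_mem_nhds ht0)
    have hEle : E ≤ 0 := slope_deriv_nonpos ht0 hdx hmin
    have hterm : ∀ j : Fin m, p j t * (x t * Real.exp (-η)) ≤
        p j t * x (t - τd j t) * Real.exp (-(a j t * x (t - σd j t))) := by
      intro j
      have hτj := hτub j t ht0.le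
      have hτdnn := (hA0.2.2.2 j).2.2.1 t ht0.le
      have harg1 : t - τd j t ∈ Icc (0:ℝ) t := ⟨by linarith [hτj.1], by linarith [hτdnn.1]⟩
      have harg2a : (0:ℝ) ≤ t - σd j t := by linarith [hτj.2]
      have harg2b : T1 ≤ t - σd j t := by linarith [hτj.2]
      have hxs : x (t - σd j t) < η / Cm := hT1 _ harg2b
      have hxsnn : 0 ≤ x (t - σd j t) := (hpos _ harg2a).le
      have haC : a j t ≤ Cm := le_trans (hcC j t ht0.le).2 (hCmle j)
      have hapos : 0 ≤ a j t := le_trans (hc0 j).le (hcC j t ht0.le).1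
      have hax : a j t * x (t - σd j t) ≤ η := by
        have h1 : a j t * x (t - σd j t) ≤ Cm * (η / Cm) :=
          mul_le_mul haC hxs.le hxsnn hCmpos.le
        have h2 : Cm * (η / Cm) = η := by field_simp
        linarith
      have hexp : Real.exp (-η) ≤ Real.exp (-(a j t * x (t - σd j t))) :=
        Real.exp_le_exp.2 (by linarith)
      have hpj : 0 < p j t := hppos j t ht0.le
      have hx1 : x t ≤ x (t - τd j t) := hmin _ harg1
      calc p j t * (x t * Real.exp (-η)) = p j t * x t * Real.exp (-η) := by ring
        _ ≤ p j t * x (t - τd j t) * Real.exp (-(a j t * x (t - σd j t))) :=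
          mul_le_mul (mul_le_mul_of_nonneg_left hx1 hpj.le) hexp (Real.exp_pos _).le
            (mul_nonneg hpj.le (le_trans hxt.le hx1))
    have hsum : (∑ j, p j t) * (x t * Real.exp (-η)) ≤
        ∑ j, p j t * x (t - τd j t) * Real.exp (-(a j t * x (t - σd j t))) := by
      rw [Finset.sum_mul]
      exact Finset.sum_le_sum fun j _ => hterm j
    have hpδ : r * δ t < ∑ j, p j t := (lt_div_iff₀ hδt).1 (hT0 t htT0)
    have h1 : (r * δ t) * (x t * Real.exp (-η)) ≤ (∑ j, p j t) * (x t * Real.exp (-η)) :=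
      mul_le_mul_of_nonneg_right hpδ.le (by positivity)
    have h2 : δ t * x t < (r * δ t) * (x t * Real.exp (-η)) := by
      nlinarith [mul_pos hδt hxt, hkey]
    have : 0 < E := by rw [hEdef]; linarith
    linarith
  · -- no blow-up
    intro hinf
    obtain ⟨K, hK⟩ := hA1.2
    have hKev : ∀ᶠ t in atTop, (∑ j, p j t) / δ t ≤ K := eventually_map.1 hK
    have hK1 : 1 < K := by
      obtain ⟨t, ht1, ht2⟩ := (hev_r.and hKev).exists
      linarith
    have hlogK : 0 < Real.log K := Real.log_pos hK1
    set M := Real.log K / cm + 1 with hMdef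
    have hMpos : 0 < M := by
      have : 0 ≤ Real.log K / cm := div_nonneg hlogK.le hcmpos.le
      rw [hMdef]; linarith
    have hkey2 : Real.exp (-(cm * M)) * K < 1 := by
      have hcmM : cm * M = Real.log K + cm := by
        rw [hMdef]; field_simp
      have h1 : Real.exp (-(Real.log K + cm)) * K = Real.exp (-cm) := by
        calc Real.exp (-(Real.log K + cm)) * K
            = Real.exp (-(Real.log K + cm)) * Real.exp (Real.log K) := by
              rw [Real.exp_log (by linarith : (0:ℝ) < K)]
          _ = Real.exp (-(Real.log K + cm) + Real.log K) := (Real.exp_add _ _).symm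
          _ = Real.exp (-cm) := by ring_nf
      rw [hcmM, h1, Real.exp_lt_one_iff]
      linarith
    obtain ⟨T2, hT2⟩ := eventually_atTop.1 (hinf.eventually_ge_atTop M)
    obtain ⟨T3, hT3⟩ := eventually_atTop.1 hKev
    obtain ⟨t, htT, hmax⟩ := exists_running_max hconIci hinf (max (max T3 (T2 + τ)) (τ + 1))
    have httau : τ + 1 ≤ t := le_of_lt (lt_of_le_of_lt (le_max_right _ _) htT)
    have htT3 : T3 ≤ t :=
      le_of_lt (lt_of_le_of_lt (le_trans (le_max_left T3 (T2 + τ)) (le_max_left _ _)) htT)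
    have htT2 : T2 + τ ≤ t :=
      le_of_lt (lt_of_le_of_lt (le_trans (le_max_right T3 (T2 + τ)) (le_max_left _ _)) htT)
    have ht0 : 0 < t := by linarith
    have hxt : 0 < x t := hpos t ht0.le
    have hδt : 0 < δ t := hδpos t ht0.le
    set E := (∑ j, p j t * x (t - τd j t) * Real.exp (-(a j t * x (t - σd j t)))) - δ t * x t
      with hEdef
    have hdx : HasDerivAt x E t := (hder t ht0.le).hasDerivAt (Ici_mem_nhds ht0)
    have hEge : 0 ≤ E := slope_deriv_nonneg ht0 hdx hmax
    have hterm : ∀ j : Fin m, p j t * x (t - τd j t) * Real.exp (-(a j t * x (t - σd j t))) ≤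
        p j t * (x t * Real.exp (-(cm * M))) := by
      intro j
      have hτj := hτub j t ht0.le
      have hτdnn := (hA0.2.2.2 j).2.2.1 t ht0.le
      have harg1 : t - τd j t ∈ Icc (0:ℝ) t := ⟨by linarith [hτj.1], by linarith [hτdnn.1]⟩
      have harg2a : (0:ℝ) ≤ t - σd j t := by linarith [hτj.2]
      have harg2b : T2 ≤ t - σd j t := by linarith [hτj.2]
      have hxs : M ≤ x (t - σd j t) := hT2 _ harg2b
      have hac : cm ≤ a j t := le_trans (hcmle j) (hcC j t ht0.le).1
      have hax : cm * M ≤ a j t * x (t - σd j t) :=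
        mul_le_mul hac hxs hMpos.le (le_trans hcmpos.le hac)
      have hexp : Real.exp (-(a j t * x (t - σd j t))) ≤ Real.exp (-(cm * M)) :=
        Real.exp_le_exp.2 (by linarith)
      have hpj : 0 < p j t := hppos j t ht0.le
      have hx1 : x (t - τd j t) ≤ x t := hmax _ harg1
      calc p j t * x (t - τd j t) * Real.exp (-(a j t * x (t - σd j t)))
          ≤ p j t * x t * Real.exp (-(cm * M)) :=
            mul_le_mul (mul_le_mul_of_nonneg_left hx1 hpj.le) hexp (Real.exp_pos _).le
              (mul_nonneg hpj.le hxt.le)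
        _ = p j t * (x t * Real.exp (-(cm * M))) := by ring
    have hsum : (∑ j, p j t * x (t - τd j t) * Real.exp (-(a j t * x (t - σd j t)))) ≤
        (∑ j, p j t) * (x t * Real.exp (-(cm * M))) := by
      rw [Finset.sum_mul]
      exact Finset.sum_le_sum fun j _ => hterm j
    have hpδ : (∑ j, p j t) ≤ K * δ t := (div_le_iff₀ hδt).1 (hT3 t htT3)
    have h1 : (∑ j, p j t) * (x t * Real.exp (-(cm * M))) ≤
        (K * δ t) * (x t * Real.exp (-(cm * M))) :=
      mul_le_mul_of_nonneg_right hpδ (by positivity)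
    have h2 : (K * δ t) * (x t * Real.exp (-(cm * M))) < δ t * x t := by
      nlinarith [mul_pos hδt hxt, hkey2]
    have : E < 0 := by rw [hEdef]; linarith
    linarith
end
end

section
/- Assume (A0), (A1) and (A2). Then every positive solution x of equation (*) is permanent: 0 < liminf_{t→∞} x(t) ≤ limsup_{t→∞} x(t) < ∞. -/
open Real Filter MeasureTheory Set
open Topology

noncomputable section

namespace NicholsonAux

lemma intInt {g : ℝ → ℝ} (hg : ContinuousOn g (Ici 0)) {u v : ℝ} (hu : 0 ≤ u) (hv : 0 ≤ v) :
    IntervalIntegrable g MeasureTheory.volume u v := by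
  apply ContinuousOn.intervalIntegrable
  apply hg.mono
  intro z hz
  exact le_trans (le_min hu hv) hz.1

lemma primitive_hasDerivAt {g : ℝ → ℝ} (hg : ContinuousOn g (Ici 0)) {c t : ℝ}
    (hc : 0 ≤ c) (ht : 0 < t) :
    HasDerivAt (fun s => ∫ r in c..s, g r) (g t) t := by
  apply intervalIntegral.integral_hasDerivAt_right (intInt hg hc ht.le)
  · exact (hg.mono Ioi_subset_Ici_self).stronglyMeasurableAtFilter isOpen_Ioi t ht
  · exact (hg t ht.le).continuousAt (Ici_mem_nhds ht)

lemma primitive_continuousOn {g : ℝ → ℝ} (hg : ContinuousOn g (Ici 0)) {c u v : ℝ}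
    (hc : 0 ≤ c) (hcu : c ≤ u) (huv : u ≤ v) :
    ContinuousOn (fun s => ∫ r in c..s, g r) (Icc u v) := by
  have h1 : ContinuousOn (fun s => ∫ r in c..s, g r) (uIcc c v) :=
    intervalIntegral.continuousOn_primitive_interval'
      (intInt hg hc (hc.trans (hcu.trans huv))) left_mem_uIcc
  apply h1.mono
  rw [uIcc_of_le (hcu.trans huv)]
  exact Icc_subset_Icc hcu le_rfl

lemma mono_of_deriv {f : ℝ → ℝ} {a b : ℝ} (hab : a ≤ b) (hc : ContinuousOn f (Icc a b))
    (hder : ∀ t ∈ Ioo a b, ∃ d, HasDerivAt f d t ∧ 0 ≤ d) : f a ≤ f b := by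
  have hmono : MonotoneOn f (Icc a b) := by
    apply monotoneOn_of_deriv_nonneg (convex_Icc a b) hc
    · rw [interior_Icc]; intro t ht; obtain ⟨d, hd, _⟩ := hder t ht
      exact hd.differentiableAt.differentiableWithinAt
    · rw [interior_Icc]; intro t ht; obtain ⟨d, hd, h0⟩ := hder t ht
      rw [hd.deriv]; exact h0
  exact hmono (left_mem_Icc.mpr hab) (right_mem_Icc.mpr hab) hab

lemma anti_of_deriv {f : ℝ → ℝ} {a b : ℝ} (hab : a ≤ b) (hc : ContinuousOn f (Icc a b))
    (hder : ∀ t ∈ Ioo a b, ∃ d, HasDerivAt f d t ∧ d ≤ 0) : f b ≤ f a := by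
  have h := mono_of_deriv (f := fun s => -f s) hab hc.neg (fun t ht => by
    obtain ⟨d, hd, h0⟩ := hder t ht
    exact ⟨-d, hd.neg, neg_nonneg.mpr h0⟩)
  simpa using h

lemma deriv_nonneg_of_left_max {f : ℝ → ℝ} {r d h : ℝ} (hd : HasDerivAt f d r)
    (hh : 0 < h) (hmax : ∀ s, r - h ≤ s → s < r → f s ≤ f r) : 0 ≤ d := by
  have hs := hasDerivAt_iff_tendsto_slope.mp hd
  have h2 : Tendsto (slope f r) (𝓝[<] r) (𝓝 d) :=
    hs.mono_left (nhdsWithin_mono r fun s hs => ne_of_lt hs)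
  refine ge_of_tendsto h2 ?_
  filter_upwards [Ioo_mem_nhdsLT_of_mem (⟨by linarith, le_refl r⟩ : r ∈ Ioc (r - h) r)] with s hs
  rw [slope_def_field]
  rw [div_nonneg_iff]
  right
  constructor
  · exact sub_nonpos.mpr (hmax s hs.1.le hs.2)
  · linarith [hs.2]

lemma deriv_nonpos_of_left_min {f : ℝ → ℝ} {r d h : ℝ} (hd : HasDerivAt f d r)
    (hh : 0 < h) (hmin : ∀ s, r - h ≤ s → s < r → f r ≤ f s) : d ≤ 0 := by
  have h0 := deriv_nonneg_of_left_max (f := fun s => -f s) hd.neg hh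
    (fun s h1 h2 => neg_le_neg (hmin s h1 h2))
  linarith

end NicholsonAux

set_option maxHeartbeats 1000000 in
/-- Under (A0), (A1) and (A2), every positive solution of (*) is permanent:
`0 < liminf_{t→∞} x(t) ≤ limsup_{t→∞} x(t) < ∞`. -/
theorem permanence_of_solutions
    (m : ℕ) (hm : 0 < m) (p a : Fin m → ℝ → ℝ) (δ : ℝ → ℝ)
    (τd σd : Fin m → ℝ → ℝ) (τ : ℝ)
    (hA0 : HypA0 m p a δ τd σd) (hτ : IsMaxDelay m τd σd τ)
    (hA1 : HypA1 m p δ) (hA2 : HypA2 m p τ)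
    (x : ℝ → ℝ) (hx : IsPosSol m p a δ τd σd τ x) :
    0 < Filter.liminf x Filter.atTop ∧
      Filter.liminf x Filter.atTop ≤ Filter.limsup x Filter.atTop ∧
      Filter.IsBoundedUnder (· ≤ ·) Filter.atTop x := by
    classical
  obtain ⟨hp, ha, hδ, hdel⟩ := hA0
  obtain ⟨hl1, hlbdd⟩ := hA1
  obtain ⟨hxc, hxinit, hx0, hxd⟩ := hx
  obtain ⟨hδc, hδpos⟩ := hδ
  set j0 : Fin m := ⟨0, hm⟩ with hj0def
  -- delays
  have hτdnn : ∀ (j : Fin m) (t : ℝ), 0 ≤ t → 0 ≤ τd j t := fun j t ht => ((hdel j).2.2.1 t ht).1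
  have hσdnn : ∀ (j : Fin m) (t : ℝ), 0 ≤ t → 0 ≤ σd j t := fun j t ht => ((hdel j).2.2.1 t ht).2
  have hτdle : ∀ (j : Fin m) (t : ℝ), 0 ≤ t → τd j t ≤ τ := fun j t ht =>
    hτ.1 ⟨j, t, ht, Or.inl rfl⟩
  have hσdle : ∀ (j : Fin m) (t : ℝ), 0 ≤ t → σd j t ≤ τ := fun j t ht =>
    hτ.1 ⟨j, t, ht, Or.inr rfl⟩
  have hτ0 : 0 ≤ τ := le_trans (hτdnn j0 0 le_rfl) (hτdle j0 0 le_rfl)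
  set P : ℝ → ℝ := fun t => ∑ j, p j t with hPdef
  set S : ℝ → ℝ :=
    fun t => ∑ j, p j t * x (t - τd j t) * Real.exp (-(a j t * x (t - σd j t))) with hSdef
  have hDx : ∀ t : ℝ, 0 < t → HasDerivAt x (S t - δ t * x t) t := fun t ht =>
    (hxd t ht.le).hasDerivAt (Ici_mem_nhds ht)
  have hPc : ContinuousOn P (Ici 0) := continuousOn_finset_sum _ (fun j _ => (hp j).1)
  have hPpos : ∀ t : ℝ, 0 ≤ t → 0 < P t := fun t ht =>
    Finset.sum_pos (fun j _ => (hp j).2 t ht) ⟨j0, Finset.mem_univ _⟩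
  -- generic monotonicity of x(t)·exp(∫₀ᵗ δ)
  have key : ∀ u t : ℝ, 0 ≤ u → u ≤ t → (∀ s, -τ ≤ s → s < t → 0 ≤ x s) →
      x u * Real.exp (∫ r in (0:ℝ)..u, δ r) ≤ x t * Real.exp (∫ r in (0:ℝ)..t, δ r) := by
    intro u t hu hut hxs
    apply NicholsonAux.mono_of_deriv hut
    · have h1 : ContinuousOn x (Icc u t) := hxc.mono (fun s hs => le_trans (by linarith) hs.1)
      exact h1.mul (Real.continuous_exp.comp_continuousOn
        (NicholsonAux.primitive_continuousOn hδc le_rfl hu hut))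
    · intro s hs
      have hs0 : 0 < s := lt_of_le_of_lt hu hs.1
      have hI := NicholsonAux.primitive_hasDerivAt hδc (le_refl (0:ℝ)) hs0
      have hder := (hDx s hs0).mul hI.exp
      refine ⟨_, hder, ?_⟩
      have hSnn : 0 ≤ S s := by
        apply Finset.sum_nonneg
        intro j _
        have h1 : -τ ≤ s - τd j s := by
          have := hτdle j s hs0.le; linarith [hτdnn j s hs0.le]
        have h2 : s - τd j s < t := by
          have := hτdnn j s hs0.le; linarith [hs.2]
        exact mul_nonneg (mul_nonneg ((hp j).2 s hs0.le).le (hxs _ h1 h2)) (Real.exp_nonneg _)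
      have heq : (S s - δ s * x s) * Real.exp (∫ r in (0:ℝ)..s, δ r) +
          x s * (Real.exp (∫ r in (0:ℝ)..s, δ r) * δ s)
          = S s * Real.exp (∫ r in (0:ℝ)..s, δ r) := by ring
      rw [heq]
      exact mul_nonneg hSnn (Real.exp_nonneg _)
  -- positivity
  have hpos : ∀ t : ℝ, 0 ≤ t → 0 < x t := by
    by_contra hcon
    push_neg at hcon
    obtain ⟨t₁, ht₁, hxt₁⟩ := hcon
    set Z := {s : ℝ | 0 ≤ s ∧ x s ≤ 0} with hZdef
    have hZne : Z.Nonempty := ⟨t₁, ht₁, hxt₁⟩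
    have hZbdd : BddBelow Z := ⟨0, fun s hs => hs.1⟩
    have hZc : IsClosed Z := by
      have h1 : IsClosed (Ici (0:ℝ) ∩ x ⁻¹' (Iic 0)) :=
        ContinuousOn.preimage_isClosed_of_isClosed
          (hxc.mono (fun s hs => le_trans (by linarith : -τ ≤ 0) hs)) isClosed_Ici isClosed_Iic
      exact h1
    set r := sInf Z with hrdef
    have hrZ : r ∈ Z := hZc.csInf_mem hZne hZbdd
    have hr0 : 0 < r := by
      rcases eq_or_lt_of_le hrZ.1 with h | h
      · exfalso; rw [← h] at hrZ; linarith [hrZ.2, hx0]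
      · exact h
    have hxpos : ∀ s, -τ ≤ s → s < r → 0 ≤ x s := by
      intro s hs hsr
      rcases lt_or_ge s 0 with h | h
      · exact hxinit s ⟨hs, h⟩
      · by_contra hneg
        push_neg at hneg
        have hmem : s ∈ Z := ⟨h, hneg.le⟩
        have := csInf_le hZbdd hmem
        linarith
    have hk := key 0 r le_rfl hr0.le hxpos
    rw [intervalIntegral.integral_same, Real.exp_zero, mul_one] at hk
    nlinarith [Real.exp_pos (∫ r' in (0:ℝ)..r, δ r'), hrZ.2]
  have hnn : ∀ s : ℝ, -τ ≤ s → 0 ≤ x s := by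
    intro s hs
    rcases lt_or_ge s 0 with h | h
    · exact hxinit s ⟨hs, h⟩
    · exact (hpos s h).le
  -- decay estimate
  have hdecay : ∀ u t : ℝ, 0 ≤ u → u ≤ t → x u ≤ x t * Real.exp (∫ r in u..t, δ r) := by
    intro u t hu hut
    have hk := key u t hu hut (fun s hs _ => hnn s hs)
    have hadd : (∫ r in (0:ℝ)..u, δ r) + (∫ r in u..t, δ r) = ∫ r in (0:ℝ)..t, δ r :=
      intervalIntegral.integral_add_adjacent_intervals
        (NicholsonAux.intInt hδc le_rfl hu) (NicholsonAux.intInt hδc hu (hu.trans hut))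
    rw [← hadd, Real.exp_add] at hk
    have h2 : x u * Real.exp (∫ r in (0:ℝ)..u, δ r) ≤
        (x t * Real.exp (∫ r in u..t, δ r)) * Real.exp (∫ r in (0:ℝ)..u, δ r) := by
      nlinarith [hk]
    exact (mul_le_mul_iff_of_pos_right (Real.exp_pos _)).mp h2
  -- constants for a
  choose ca Ca hcapos habd using fun j => (ha j).2
  have hFne : (Finset.univ : Finset (Fin m)).Nonempty := ⟨j0, Finset.mem_univ _⟩
  set c := Finset.univ.inf' hFne ca with hcdef
  set C := Finset.univ.sup' hFne Ca with hCdef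
  have hcpos : 0 < c := by
    rw [hcdef, Finset.lt_inf'_iff]
    exact fun j _ => hcapos j
  have hcle : ∀ (j : Fin m) (t : ℝ), 0 ≤ t → c ≤ a j t := fun j t ht =>
    le_trans (Finset.inf'_le _ (Finset.mem_univ j)) (habd j t ht).1
  have hCge : ∀ (j : Fin m) (t : ℝ), 0 ≤ t → a j t ≤ C := fun j t ht =>
    le_trans (habd j t ht).2 (Finset.le_sup' _ (Finset.mem_univ j))
  have hCpos : 0 < C :=
    lt_of_lt_of_le (hcapos j0) (le_trans (habd j0 0 le_rfl).1 (hCge j0 0 le_rfl))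
  -- eventual bounds from (A1), (A2)
  obtain ⟨K, hKb⟩ := hlbdd
  have hKev : ∀ᶠ t in atTop, P t / δ t ≤ K := by
    rw [Filter.eventually_map] at hKb; exact hKb
  obtain ⟨B₀, hBb⟩ := hA2
  have hBev : ∀ᶠ t in atTop, (∫ s in t - τ..t, P s) ≤ B₀ := by
    rw [Filter.eventually_map] at hBb; exact hBb
  obtain ⟨q, hq1, hql⟩ : ∃ q : ℝ, 1 < q ∧ q < Filter.liminf (fun t => P t / δ t) Filter.atTop :=
    ⟨(1 + Filter.liminf (fun t => P t / δ t) Filter.atTop) / 2, by linarith, by linarith⟩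
  have hbddge : Filter.IsBoundedUnder (· ≥ ·) Filter.atTop (fun t => P t / δ t) := by
    refine ⟨0, ?_⟩
    rw [Filter.eventually_map]
    filter_upwards [eventually_ge_atTop (0:ℝ)] with t ht
    exact div_nonneg (hPpos t ht).le (hδpos t ht).le
  have hqev : ∀ᶠ t in atTop, q < P t / δ t := Filter.eventually_lt_of_lt_liminf hql hbddge
  obtain ⟨T', hT'⟩ := Filter.eventually_atTop.mp ((hqev.and hKev).and hBev)
  set T₀ := max T' 0 with hT₀def
  have hT₀0 : (0:ℝ) ≤ T₀ := le_max_right _ _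
  have hmain : ∀ t : ℝ, T₀ ≤ t →
      q < P t / δ t ∧ P t / δ t ≤ K ∧ (∫ s in t - τ..t, P s) ≤ B₀ := by
    intro t ht
    have h := hT' t (le_trans (le_max_left _ _) ht)
    exact ⟨h.1.1, h.1.2, h.2⟩
  set B := max B₀ 0 with hBdef
  have hB0 : (0:ℝ) ≤ B := le_max_right _ _
  have hK1 : 1 < K := lt_of_lt_of_le hq1 (le_trans (hmain T₀ le_rfl).1.le (hmain T₀ le_rfl).2.1)
  have hδleP : ∀ t : ℝ, T₀ ≤ t → δ t ≤ P t := by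
    intro t ht
    have h1 := (hmain t ht).1
    have h2 := hδpos t (le_trans hT₀0 ht)
    rw [lt_div_iff₀ h2] at h1
    nlinarith
  have hwinP : ∀ v t : ℝ, T₀ ≤ t - τ → t - τ ≤ v → v ≤ t → (∫ s in v..t, P s) ≤ B := by
    intro v t h1 h2 h3
    have hv0 : 0 ≤ v := le_trans hT₀0 (le_trans h1 h2)
    have ht0 : 0 ≤ t := le_trans hv0 h3
    have htτ0 : 0 ≤ t - τ := le_trans hT₀0 h1
    have hadd : (∫ s in t - τ..v, P s) + (∫ s in v..t, P s) = ∫ s in t - τ..t, P s :=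
      intervalIntegral.integral_add_adjacent_intervals
        (NicholsonAux.intInt hPc htτ0 hv0) (NicholsonAux.intInt hPc hv0 ht0)
    have hnn1 : 0 ≤ ∫ s in t - τ..v, P s :=
      intervalIntegral.integral_nonneg h2 (fun u hu => (hPpos u (le_trans htτ0 hu.1)).le)
    have hB' : (∫ s in t - τ..t, P s) ≤ B₀ := (hmain t (by linarith)).2.2
    have : (∫ s in v..t, P s) ≤ B₀ := by linarith
    exact le_trans this (le_max_left _ _)
  have hwinδ : ∀ v t : ℝ, T₀ ≤ t - τ → t - τ ≤ v → v ≤ t → (∫ s in v..t, δ s) ≤ B := by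
    intro v t h1 h2 h3
    have hv0 : 0 ≤ v := le_trans hT₀0 (le_trans h1 h2)
    have ht0 : 0 ≤ t := le_trans hv0 h3
    have hmono : (∫ s in v..t, δ s) ≤ ∫ s in v..t, P s := by
      apply intervalIntegral.integral_mono_on h3
        (NicholsonAux.intInt hδc hv0 ht0) (NicholsonAux.intInt hPc hv0 ht0)
      intro u hu
      exact hδleP u (le_trans h1 (le_trans h2 hu.1))
    linarith [hwinP v t h1 h2 h3]
  have hdecayB : ∀ u t : ℝ, T₀ + τ ≤ t → t - τ ≤ u → u ≤ t → x u ≤ x t * Real.exp B := by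
    intro u t h1 h2 h3
    have hu0 : 0 ≤ u := by linarith
    have hd := hdecay u t hu0 h3
    have hw := hwinδ u t (by linarith) h2 h3
    have hxt : 0 ≤ x t := hnn t (by linarith)
    exact le_trans hd (mul_le_mul_of_nonneg_left (Real.exp_le_exp.mpr hw) hxt)
  -- pointwise bound on the nonlinear sum beyond T₀ + τ
  have hSle : ∀ s : ℝ, T₀ + τ ≤ s → S s ≤ Real.exp B * P s * x s := by
    intro s hsτ
    have hs0 : 0 ≤ s := by linarith
    have hterm : ∀ j ∈ Finset.univ,
        p j s * x (s - τd j s) * Real.exp (-(a j s * x (s - σd j s)))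
        ≤ p j s * (x s * Real.exp B) := by
      intro j _
      have h1 : x (s - τd j s) ≤ x s * Real.exp B :=
        hdecayB (s - τd j s) s hsτ (by linarith [hτdle j s hs0]) (by linarith [hτdnn j s hs0])
      have hxσ : 0 ≤ x (s - σd j s) := hnn _ (by linarith [hσdle j s hs0])
      have h2 : Real.exp (-(a j s * x (s - σd j s))) ≤ 1 := by
        rw [Real.exp_le_one_iff]
        exact neg_nonpos.mpr (mul_nonneg (le_trans hcpos.le (hcle j s hs0)) hxσ)
      have hpj : 0 ≤ p j s := ((hp j).2 s hs0).le
      have hxs : 0 ≤ x s := hnn s (by linarith)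
      calc p j s * x (s - τd j s) * Real.exp (-(a j s * x (s - σd j s)))
          ≤ p j s * (x s * Real.exp B) * 1 := by
            apply mul_le_mul (mul_le_mul_of_nonneg_left h1 hpj) h2 (Real.exp_nonneg _)
            exact mul_nonneg hpj (mul_nonneg hxs (Real.exp_nonneg _))
      _ = p j s * (x s * Real.exp B) := mul_one _
    have hsum := Finset.sum_le_sum hterm
    rw [← Finset.sum_mul] at hsum
    calc S s ≤ P s * (x s * Real.exp B) := hsum
    _ = Real.exp B * P s * x s := by ring
  -- growth estimate
  have hgrow : ∀ u r : ℝ, T₀ + τ ≤ u → u ≤ r →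
      x r ≤ x u * Real.exp (Real.exp B * ∫ s in u..r, P s) := by
    intro u r hu hur
    have hu0 : 0 ≤ u := by linarith
    have hanti := NicholsonAux.anti_of_deriv
      (f := fun s => x s * Real.exp (-(Real.exp B * ∫ r' in u..s, P r'))) hur ?_ ?_
    · simp only [intervalIntegral.integral_same, mul_zero, neg_zero, Real.exp_zero,
        mul_one] at hanti
      have h2 := mul_le_mul_of_nonneg_right hanti
        (Real.exp_nonneg (Real.exp B * ∫ s in u..r, P s))
      rw [mul_assoc, ← Real.exp_add, neg_add_cancel, Real.exp_zero, mul_one] at h2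
      exact h2
    · have h1 : ContinuousOn x (Icc u r) := hxc.mono (fun s hs => by
        simp only [mem_Ici]; linarith [hs.1])
      refine h1.mul (Real.continuous_exp.comp_continuousOn ?_)
      exact (continuousOn_const.mul (NicholsonAux.primitive_continuousOn hPc hu0 le_rfl hur)).neg
    · intro s hs
      have hs0 : 0 < s := lt_of_le_of_lt hu0 hs.1
      have hI := NicholsonAux.primitive_hasDerivAt hPc hu0 hs0
      have hinner : HasDerivAt (fun w => -(Real.exp B * ∫ r' in u..w, P r'))
          (-(Real.exp B * P s)) s := (hI.const_mul (Real.exp B)).neg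
      have hder := (hDx s hs0).mul hinner.exp
      refine ⟨_, hder, ?_⟩
      have hSs := hSle s (le_trans hu hs.1.le)
      have hδx : 0 ≤ δ s * x s := mul_nonneg (hδpos s hs0.le).le (hnn s (by linarith))
      have heq : (S s - δ s * x s) * Real.exp (-(Real.exp B * ∫ r' in u..s, P r')) +
          x s * (Real.exp (-(Real.exp B * ∫ r' in u..s, P r')) * -(Real.exp B * P s))
          = Real.exp (-(Real.exp B * ∫ r' in u..s, P r')) *
            (S s - δ s * x s - Real.exp B * P s * x s) := by ring
      rw [heq]
      have h3 : S s - δ s * x s - Real.exp B * P s * x s ≤ 0 := by linarith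
      exact mul_nonpos_of_nonneg_of_nonpos (Real.exp_nonneg _) h3
  -- global upper bound
  set T₁ := T₀ + 2 * τ + 1 with hT₁def
  obtain ⟨r₀, hr₀mem, hr₀max⟩ := isCompact_Icc.exists_isMaxOn
    (nonempty_Icc.mpr (by linarith : -τ ≤ T₁)) (hxc.mono (fun s hs => hs.1))
  set R := Real.log K / c with hRdef
  have hR0 : 0 ≤ R := div_nonneg (Real.log_nonneg hK1.le) hcpos.le
  set M := max (x r₀) (R * Real.exp (Real.exp B * B)) with hMdef
  have hub : ∀ t : ℝ, -τ ≤ t → x t ≤ M := by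
    by_contra hcon
    push_neg at hcon
    obtain ⟨t₁, ht₁, hMt₁⟩ := hcon
    have ht₁T₁ : T₁ < t₁ := by
      by_contra h
      push_neg at h
      have h2 : x t₁ ≤ x r₀ := hr₀max ⟨ht₁, h⟩
      have h3 : x t₁ ≤ M := le_trans h2 (le_max_left _ _)
      linarith
    obtain ⟨r, hrmem, hrmax⟩ := isCompact_Icc.exists_isMaxOn
      (nonempty_Icc.mpr (by linarith : -τ ≤ t₁)) (hxc.mono (fun s hs => hs.1))
    have hxr : M < x r := lt_of_lt_of_le hMt₁ (hrmax ⟨by linarith, le_rfl⟩)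
    have hrT₁ : T₁ < r := by
      by_contra h
      push_neg at h
      have h2 : x r ≤ x r₀ := hr₀max ⟨hrmem.1, h⟩
      have h3 : x r ≤ M := le_trans h2 (le_max_left _ _)
      linarith
    have hr0 : 0 < r := by simp only [hT₁def] at hrT₁; linarith
    have hd0 : 0 ≤ S r - δ r * x r := by
      apply NicholsonAux.deriv_nonneg_of_left_max (hDx r hr0) (h := r + τ) (by linarith)
      intro s h1 h2
      exact hrmax ⟨by linarith, by linarith [hrmem.2]⟩
    obtain ⟨j₁, _, hj₁⟩ := Finset.exists_min_image Finset.univ (fun j => x (r - σd j r))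
      ⟨j0, Finset.mem_univ _⟩
    set v := x (r - σd j₁ r) with hvdef
    have hvnn : 0 ≤ v := hnn _ (by simp only [hT₁def] at hrT₁; linarith [hσdle j₁ r hr0.le])
    have hrT₀ : T₀ ≤ r := by simp only [hT₁def] at hrT₁; linarith
    have hxrpos : 0 < x r := hpos r hr0.le
    have hSr : S r ≤ P r * x r * Real.exp (-(c * v)) := by
      have hterm : ∀ j ∈ Finset.univ,
          p j r * x (r - τd j r) * Real.exp (-(a j r * x (r - σd j r)))
          ≤ p j r * (x r * Real.exp (-(c * v))) := by
        intro j _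
        have hpj : 0 ≤ p j r := ((hp j).2 r hr0.le).le
        have h1 : x (r - τd j r) ≤ x r := hrmax
          ⟨by linarith [hτdle j r hr0.le], by linarith [hτdnn j r hr0.le, hrmem.2]⟩
        have hxσ : 0 ≤ x (r - σd j r) := hnn _
          (by simp only [hT₁def] at hrT₁; linarith [hσdle j r hr0.le])
        have h2 : Real.exp (-(a j r * x (r - σd j r))) ≤ Real.exp (-(c * v)) := by
          apply Real.exp_le_exp.mpr
          have h3 : c * v ≤ a j r * x (r - σd j r) := by
            calc c * v ≤ c * x (r - σd j r) :=
                  mul_le_mul_of_nonneg_left (hj₁ j (Finset.mem_univ j)) hcpos.le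
            _ ≤ a j r * x (r - σd j r) := mul_le_mul_of_nonneg_right (hcle j r hr0.le) hxσ
          linarith
        calc p j r * x (r - τd j r) * Real.exp (-(a j r * x (r - σd j r)))
            ≤ p j r * x r * Real.exp (-(c * v)) := by
              apply mul_le_mul (mul_le_mul_of_nonneg_left h1 hpj) h2 (Real.exp_nonneg _)
              exact mul_nonneg hpj hxrpos.le
        _ = p j r * (x r * Real.exp (-(c * v))) := by ring
      have hsum := Finset.sum_le_sum hterm
      rw [← Finset.sum_mul] at hsum
      calc S r ≤ P r * (x r * Real.exp (-(c * v))) := hsum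
      _ = P r * x r * Real.exp (-(c * v)) := by ring
    have hδr : δ r ≤ P r * Real.exp (-(c * v)) := by
      have h1 : δ r * x r ≤ (P r * Real.exp (-(c * v))) * x r := by
        calc δ r * x r ≤ S r := by linarith
        _ ≤ P r * x r * Real.exp (-(c * v)) := hSr
        _ = (P r * Real.exp (-(c * v))) * x r := by ring
      exact (mul_le_mul_iff_of_pos_right hxrpos).mp h1
    have hδrpos := hδpos r hr0.le
    have hexpK : Real.exp (c * v) ≤ K := by
      have h3 : δ r * Real.exp (c * v) ≤ P r := by
        have h4 := mul_le_mul_of_nonneg_right hδr (Real.exp_nonneg (c * v))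
        rwa [mul_assoc, ← Real.exp_add, neg_add_cancel, Real.exp_zero, mul_one] at h4
      have h5 : Real.exp (c * v) ≤ P r / δ r := by
        rw [le_div_iff₀ hδrpos]
        linarith [mul_comm (Real.exp (c * v)) (δ r)]
      exact le_trans h5 (hmain r hrT₀).2.1
    have hvR : v ≤ R := by
      have h5 : c * v ≤ Real.log K :=
        (Real.le_log_iff_exp_le (by linarith : (0:ℝ) < K)).mpr hexpK
      rw [hRdef, le_div_iff₀ hcpos]
      linarith [mul_comm v c]
    have hu1 : T₀ + τ ≤ r - σd j₁ r := by
      have := hσdle j₁ r hr0.le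
      simp only [hT₁def] at hrT₁
      linarith
    have hg := hgrow (r - σd j₁ r) r hu1 (by linarith [hσdnn j₁ r hr0.le])
    have hint : (∫ s in (r - σd j₁ r)..r, P s) ≤ B :=
      hwinP _ r (by simp only [hT₁def] at hrT₁; linarith)
        (by linarith [hσdle j₁ r hr0.le]) (by linarith [hσdnn j₁ r hr0.le])
    have hfinal : x r ≤ R * Real.exp (Real.exp B * B) := by
      calc x r ≤ v * Real.exp (Real.exp B * ∫ s in (r - σd j₁ r)..r, P s) := hg
      _ ≤ R * Real.exp (Real.exp B * B) := by
          apply mul_le_mul hvR (Real.exp_le_exp.mpr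
            (mul_le_mul_of_nonneg_left hint (Real.exp_nonneg _))) (Real.exp_nonneg _) hR0
    have : x r ≤ M := le_trans hfinal (le_max_right _ _)
    linarith
  -- eventual lower bound
  obtain ⟨ρ, hρmem, hρmin⟩ := isCompact_Icc.exists_isMinOn
    (nonempty_Icc.mpr (by linarith : T₀ ≤ T₁)) (hxc.mono (fun s hs => by
      simp only [mem_Ici]; linarith [hs.1]))
  have hμpos : 0 < x ρ := hpos ρ (le_trans hT₀0 hρmem.1)
  set η₀ := Real.log q / (C * Real.exp B) with hη₀def
  have hCeB : 0 < C * Real.exp B := mul_pos hCpos (Real.exp_pos _)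
  have hη₀pos : 0 < η₀ := div_pos (Real.log_pos hq1) hCeB
  set η := min η₀ (x ρ) with hηdef
  have hηpos : 0 < η := lt_min hη₀pos hμpos
  have hlb : ∀ t : ℝ, T₀ ≤ t → η ≤ x t := by
    intro t ht
    by_contra hlt
    push_neg at hlt
    have htT₁ : T₁ < t := by
      by_contra h
      push_neg at h
      have h2 : x ρ ≤ x t := hρmin ⟨ht, h⟩
      have h3 : η ≤ x t := le_trans (min_le_right _ _) h2
      linarith
    obtain ⟨r, hrmem, hrmin⟩ := isCompact_Icc.exists_isMinOn
      (nonempty_Icc.mpr (by linarith : T₀ ≤ t)) (hxc.mono (fun s hs => by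
        simp only [mem_Ici]; linarith [hs.1]))
    have hxrt : x r ≤ x t := hrmin ⟨ht, le_rfl⟩
    have hxrη : x r < η := lt_of_le_of_lt hxrt hlt
    have hrT₁ : T₁ < r := by
      by_contra h
      push_neg at h
      have h2 : x ρ ≤ x r := hρmin ⟨hrmem.1, h⟩
      have h3 : η ≤ x r := le_trans (min_le_right _ _) h2
      linarith
    have hrT₁' : T₀ + 2 * τ + 1 < r := by rw [hT₁def] at hrT₁; exact hrT₁
    have hr0 : 0 < r := by linarith
    have hrT₀ : T₀ ≤ r := by linarith
    have hd0 : S r - δ r * x r ≤ 0 := by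
      apply NicholsonAux.deriv_nonpos_of_left_min (hDx r hr0) (h := r - T₀) (by linarith)
      intro s h1 h2
      exact hrmin ⟨by linarith, by linarith [hrmem.2]⟩
    have hxrpos : 0 < x r := hpos r hr0.le
    set w := C * Real.exp B * x r with hwdef
    have hSr : P r * x r * Real.exp (-w) ≤ S r := by
      have hterm : ∀ j ∈ Finset.univ,
          p j r * (x r * Real.exp (-w)) ≤
          p j r * x (r - τd j r) * Real.exp (-(a j r * x (r - σd j r))) := by
        intro j _
        have hpj : 0 ≤ p j r := ((hp j).2 r hr0.le).le
        have h1 : x r ≤ x (r - τd j r) :=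
          hrmin ⟨by linarith [hτdle j r hr0.le], by linarith [hτdnn j r hr0.le, hrmem.2]⟩
        have hxσB : x (r - σd j r) ≤ x r * Real.exp B :=
          hdecayB _ r (by linarith) (by linarith [hσdle j r hr0.le])
            (by linarith [hσdnn j r hr0.le])
        have hxσ : 0 ≤ x (r - σd j r) := hnn _ (by linarith [hσdle j r hr0.le])
        have h2 : Real.exp (-w) ≤ Real.exp (-(a j r * x (r - σd j r))) := by
          apply Real.exp_le_exp.mpr
          have h3 : a j r * x (r - σd j r) ≤ w := by
            calc a j r * x (r - σd j r) ≤ C * x (r - σd j r) :=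
                  mul_le_mul_of_nonneg_right (hCge j r hr0.le) hxσ
            _ ≤ C * (x r * Real.exp B) := mul_le_mul_of_nonneg_left hxσB hCpos.le
            _ = w := by rw [hwdef]; ring
          linarith
        have hxτnn : 0 ≤ x (r - τd j r) := le_trans hxrpos.le h1
        calc p j r * (x r * Real.exp (-w)) = p j r * x r * Real.exp (-w) := by ring
        _ ≤ p j r * x (r - τd j r) * Real.exp (-(a j r * x (r - σd j r))) := by
            apply mul_le_mul (mul_le_mul_of_nonneg_left h1 hpj) h2 (Real.exp_nonneg _)
              (mul_nonneg hpj hxτnn)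
      have hsum := Finset.sum_le_sum hterm
      rw [← Finset.sum_mul] at hsum
      calc P r * x r * Real.exp (-w) = P r * (x r * Real.exp (-w)) := by ring
      _ ≤ S r := hsum
    have hδrpos := hδpos r hr0.le
    have h1 : P r * Real.exp (-w) ≤ δ r := by
      have h2 : (P r * Real.exp (-w)) * x r ≤ δ r * x r := by
        calc (P r * Real.exp (-w)) * x r = P r * x r * Real.exp (-w) := by ring
        _ ≤ S r := hSr
        _ ≤ δ r * x r := by linarith
      exact (mul_le_mul_iff_of_pos_right hxrpos).mp h2
    have h3 : q < Real.exp w := by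
      have h4 : P r / δ r ≤ Real.exp w := by
        rw [div_le_iff₀ hδrpos]
        have h5 := mul_le_mul_of_nonneg_right h1 (Real.exp_nonneg w)
        rw [mul_assoc, ← Real.exp_add, neg_add_cancel, Real.exp_zero, mul_one] at h5
        linarith [mul_comm (δ r) (Real.exp w)]
      exact lt_of_lt_of_le (hmain r hrT₀).1 h4
    have h5 : Real.log q < w := by
      rw [Real.log_lt_iff_lt_exp (by linarith : (0:ℝ) < q)]
      exact h3
    have h6 : η₀ ≤ x r := by
      rw [hη₀def, div_le_iff₀ hCeB]
      rw [hwdef] at h5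
      linarith [mul_comm (C * Real.exp B) (x r)]
    have : η ≤ x r := le_trans (min_le_left _ _) h6
    linarith
  -- conclusions
  have hBU : Filter.IsBoundedUnder (· ≤ ·) Filter.atTop x := by
    refine ⟨M, ?_⟩
    rw [Filter.eventually_map]
    filter_upwards [eventually_ge_atTop (-τ)] with t ht using hub t ht
  have hBL : Filter.IsBoundedUnder (· ≥ ·) Filter.atTop x := by
    refine ⟨η, ?_⟩
    rw [Filter.eventually_map]
    filter_upwards [eventually_ge_atTop T₀] with t ht using hlb t ht
  refine ⟨?_, Filter.liminf_le_limsup hBU hBL, hBU⟩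
  have hliminf : η ≤ Filter.liminf x Filter.atTop := by
    apply Filter.le_liminf_of_le hBU.isCoboundedUnder_ge
    filter_upwards [eventually_ge_atTop T₀] with t ht using hlb t ht
  linarith
end
end

section
/- Assume (A0), (A1) and (A3). If x is a positive solution of equation (*) for which L := lim_{t→∞} x(t) exists in [0,∞], then L is finite and (1/a⁺) log α ≤ L ≤ (1/a⁻) log γ. -/
open Real Filter MeasureTheory Set

noncomputable section

/- ### Auxiliary lemmas -/

lemma deriv_nonneg_of_max_left {x : ℝ → ℝ} {d A t : ℝ} (hAt : A < t)
    (hd : HasDerivAt x d t) (hmax : ∀ s ∈ Icc A t, x s ≤ x t) : 0 ≤ d := by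
  have h1 : HasDerivWithinAt x d (Iio t) t := hd.hasDerivWithinAt
  have h2 := (hasDerivWithinAt_iff_tendsto_slope' (notMem_Iio.mpr le_rfl)).mp h1
  refine ge_of_tendsto h2 ?_
  filter_upwards [Ioo_mem_nhdsLT_of_mem (⟨hAt, le_refl t⟩ : t ∈ Ioc A t)] with s hs
  have hs1 : x s ≤ x t := hmax s ⟨hs.1.le, hs.2.le⟩
  have heq : slope x t s = (x t - x s) / (t - s) := by
    rw [slope_def_field, show x s - x t = -(x t - x s) by ring,
      show s - t = -(t - s) by ring, neg_div_neg_eq]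
  rw [heq]
  exact div_nonneg (by linarith) (by linarith [hs.2])

lemma deriv_nonpos_of_min_left {x : ℝ → ℝ} {d A t : ℝ} (hAt : A < t)
    (hd : HasDerivAt x d t) (hmin : ∀ s ∈ Icc A t, x t ≤ x s) : d ≤ 0 := by
  have := deriv_nonneg_of_max_left hAt hd.neg (fun s hs => by simpa using hmin s hs)
  linarith

lemma first_hit_up {x : ℝ → ℝ} {A B c : ℝ} (hAB : A ≤ B)
    (hcont : ContinuousOn x (Icc A B)) (hA : x A < c) (hB : c ≤ x B) :
    ∃ t ∈ Ioc A B, x t = c ∧ ∀ s ∈ Icc A t, x s ≤ c := by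
  have hmem : c ∈ x '' Icc A B := intermediate_value_Icc hAB hcont ⟨hA.le, hB⟩
  set S : Set ℝ := Icc A B ∩ x ⁻¹' {c} with hS
  have hSne : S.Nonempty := by
    obtain ⟨u, hu, hxu⟩ := hmem; exact ⟨u, hu, by simp [hxu]⟩
  have hSclosed : IsClosed S := hcont.preimage_isClosed_of_isClosed isClosed_Icc isClosed_singleton
  have hSbdd : BddBelow S := ⟨A, fun u hu => hu.1.1⟩
  set t := sInf S with ht
  have htS : t ∈ S := hSclosed.csInf_mem hSne hSbdd
  have htc : x t = c := htS.2
  have htA : A < t := by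
    rcases lt_or_eq_of_le htS.1.1 with h | h
    · exact h
    · exact absurd htc (by rw [← h]; exact ne_of_lt hA)
  refine ⟨t, ⟨htA, htS.1.2⟩, htc, fun s hs => ?_⟩
  by_contra hgt
  push_neg at hgt
  have hsA : A ≤ s := hs.1
  have hst : s ≤ t := hs.2
  have : c ∈ x '' Icc A s := intermediate_value_Icc hsA
    (hcont.mono (Icc_subset_Icc le_rfl (hst.trans htS.1.2))) ⟨hA.le, hgt.le⟩
  obtain ⟨u, hu, hxu⟩ := this
  have huS : u ∈ S := ⟨⟨hu.1, (hu.2.trans hst).trans htS.1.2⟩, by simp [hxu]⟩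
  have htu : t ≤ u := csInf_le hSbdd huS
  have hst' : s = t := le_antisymm hst (htu.trans hu.2)
  rw [hst', htc] at hgt
  exact lt_irrefl c hgt

lemma first_hit_down {x : ℝ → ℝ} {A B c : ℝ} (hAB : A ≤ B)
    (hcont : ContinuousOn x (Icc A B)) (hA : c < x A) (hB : x B ≤ c) :
    ∃ t ∈ Ioc A B, x t = c ∧ ∀ s ∈ Icc A t, c ≤ x s := by
  obtain ⟨t, htm, h1, h2⟩ := first_hit_up (x := fun s => -x s) (c := -c) hAB
    (hcont.neg) (by simpa using hA) (by simpa using hB)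
  exact ⟨t, htm, by linarith [h1], fun s hs => by linarith [h2 s hs]⟩

lemma antitoneOn_aux {F F' : ℝ → ℝ} {T : ℝ} (hc : ContinuousOn F (Ici T))
    (hF : ∀ t ∈ Ioi T, HasDerivAt F (F' t) t) (h0 : ∀ t ∈ Ioi T, F' t ≤ 0) :
    AntitoneOn F (Ici T) := by
  apply antitoneOn_of_deriv_nonpos (convex_Ici T) hc
  · intro t ht; rw [interior_Ici] at ht
    exact (hF t ht).differentiableAt.differentiableWithinAt
  · intro t ht; rw [interior_Ici] at ht; rw [(hF t ht).deriv]; exact h0 t ht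

lemma monotoneOn_aux {F F' : ℝ → ℝ} {T : ℝ} (hc : ContinuousOn F (Ici T))
    (hF : ∀ t ∈ Ioi T, HasDerivAt F (F' t) t) (h0 : ∀ t ∈ Ioi T, 0 ≤ F' t) :
    MonotoneOn F (Ici T) := by
  apply monotoneOn_of_deriv_nonneg (convex_Ici T) hc
  · intro t ht; rw [interior_Ici] at ht
    exact (hF t ht).differentiableAt.differentiableWithinAt
  · intro t ht; rw [interior_Ici] at ht; rw [(hF t ht).deriv]; exact h0 t ht

lemma monotoneOn_Icc_aux {F F' : ℝ → ℝ} {A B : ℝ} (hc : ContinuousOn F (Icc A B))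
    (hF : ∀ t ∈ Ioo A B, HasDerivAt F (F' t) t) (h0 : ∀ t ∈ Ioo A B, 0 ≤ F' t) :
    MonotoneOn F (Icc A B) := by
  apply monotoneOn_of_deriv_nonneg (convex_Icc A B) hc
  · intro t ht; rw [interior_Icc] at ht
    exact (hF t ht).differentiableAt.differentiableWithinAt
  · intro t ht; rw [interior_Icc] at ht; rw [(hF t ht).deriv]; exact h0 t ht

set_option maxHeartbeats 1600000 in
/-- Under (A0), (A1) and (A3), if a positive solution `x` of (*) has a limit
`L ∈ [0,∞]` at `∞`, then `L` is finite and `(1/a⁺) log α ≤ L ≤ (1/a⁻) log γ`. -/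
theorem limit_of_convergent_solution_bounds
    (m : ℕ) (hm : 0 < m) (p a : Fin m → ℝ → ℝ) (δ : ℝ → ℝ)
    (τd σd : Fin m → ℝ → ℝ) (τ : ℝ)
    (hA0 : HypA0 m p a δ τd σd) (hτ : IsMaxDelay m τd σd τ)
    (hA1 : HypA1 m p δ) (hA3 : HypA3 δ)
    (aminus aplus : ℝ)
    (haminus : IsGLB {r : ℝ | ∃ j : Fin m, ∃ t : ℝ, 0 ≤ t ∧ r = a j t} aminus)
    (haplus : IsLUB {r : ℝ | ∃ j : Fin m, ∃ t : ℝ, 0 ≤ t ∧ r = a j t} aplus)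
    (α γ : ℝ)
    (hα : α = Filter.liminf (fun t => (∑ j, p j t) / δ t) Filter.atTop)
    (hγ : γ = Filter.limsup (fun t => (∑ j, p j t) / δ t) Filter.atTop)
    (x : ℝ → ℝ) (hx : IsPosSol m p a δ τd σd τ x)
    (L : EReal)
    (hL : Filter.Tendsto (fun t => (x t : EReal)) Filter.atTop (nhds L)) :
    ∃ Lr : ℝ, L = (Lr : EReal) ∧
      (1 / aplus) * Real.log α ≤ Lr ∧ Lr ≤ (1 / aminus) * Real.log γ := by
  obtain ⟨hxc, hxinit, hx0, hode⟩ := hx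
  obtain ⟨hp, ha, hδ, hdel⟩ := hA0
  set P : ℝ → ℝ := fun t => ∑ j, p j t with hP
  set r : ℝ → ℝ := fun t => P t / δ t with hr
  haveI hmne : Nonempty (Fin m) := Fin.pos_iff_nonempty.mp hm
  have j0 : Fin m := ⟨0, hm⟩
  -- basic facts about delays and τ
  have hτub : ∀ (j : Fin m), ∀ t ≥ (0:ℝ), τd j t ≤ τ ∧ σd j t ≤ τ := by
    intro j t ht
    exact ⟨hτ.1 ⟨j, t, ht, Or.inl rfl⟩, hτ.1 ⟨j, t, ht, Or.inr rfl⟩⟩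
  have hτnn : 0 ≤ τ := le_trans ((hdel j0).2.2.1 0 le_rfl).1 (hτub j0 0 le_rfl).1
  have hdelnn : ∀ (j : Fin m), ∀ t ≥ (0:ℝ), 0 ≤ τd j t ∧ 0 ≤ σd j t :=
    fun j t ht => (hdel j).2.2.1 t ht
  -- a bounds
  have hamem : ∀ (j : Fin m), ∀ t ≥ (0:ℝ), aminus ≤ a j t ∧ a j t ≤ aplus := by
    intro j t ht
    exact ⟨haminus.1 ⟨j, t, ht, rfl⟩, haplus.1 ⟨j, t, ht, rfl⟩⟩
  have haminus_pos : 0 < aminus := by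
    choose c C hc using fun j => (ha j).2
    set cmin : ℝ := Finset.univ.inf' Finset.univ_nonempty c with hcmin
    have hcminpos : 0 < cmin := by
      rw [hcmin, Finset.lt_inf'_iff]
      exact fun j _ => (hc j).1
    have hlb : cmin ∈ lowerBounds {r : ℝ | ∃ j : Fin m, ∃ t : ℝ, 0 ≤ t ∧ r = a j t} := by
      rintro u ⟨j, t, ht, rfl⟩
      exact le_trans (Finset.inf'_le c (Finset.mem_univ j)) ((hc j).2 t ht).1
    exact lt_of_lt_of_le hcminpos (haminus.2 hlb)
  have haplus_pos : 0 < aplus := lt_of_lt_of_le haminus_pos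
    (le_trans (hamem j0 0 le_rfl).1 (hamem j0 0 le_rfl).2)
  -- positivity of x
  have hδpos' : ∀ t ≥ (0:ℝ), 0 < δ t := hδ.2
  set δc : ℝ → ℝ := fun t => δ (max t 0) with hδc
  have hδccont : Continuous δc := by
    apply hδ.1.comp_continuous (continuous_id.max continuous_const)
    intro t; exact mem_Ici.mpr (le_max_right t 0)
  set D : ℝ → ℝ := fun t => ∫ s in (0:ℝ)..t, δc s with hD
  have hDderiv : ∀ t, HasDerivAt D (δc t) t :=
    fun t => (hδccont.integral_hasStrictDerivAt 0 t).hasDerivAt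
  have hDcont : Continuous D := continuous_iff_continuousAt.mpr fun t => (hDderiv t).continuousAt
  have hDtop : Tendsto D atTop atTop := by
    apply hA3.congr'
    filter_upwards [eventually_ge_atTop (0:ℝ)] with t ht
    apply intervalIntegral.integral_congr
    intro s hs
    rw [uIcc_of_le ht] at hs
    simp only [δc, max_eq_left hs.1]
  set f : ℝ → ℝ := fun t =>
    (∑ j, p j t * x (t - τd j t) * Real.exp (-(a j t * x (t - σd j t)))) - δ t * x t with hf
  have hxderiv : ∀ t > (0:ℝ), HasDerivAt x (f t) t := by
    intro t ht
    exact (hode t ht.le).hasDerivAt (Ici_mem_nhds ht)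
  have hIcisub : ∀ A B : ℝ, 0 ≤ A → Icc A B ⊆ Ici (-τ) :=
    fun A B hA s hs => le_trans (neg_nonpos.mpr hτnn) (le_trans hA hs.1)
  have hxpos : ∀ t ≥ (0:ℝ), 0 < x t := by
    by_contra hcon
    push_neg at hcon
    obtain ⟨t₁, ht₁, hxt₁⟩ := hcon
    obtain ⟨ts, hts, hxts, hxge⟩ := first_hit_down (A := 0) (B := t₁) (c := 0)
      (by linarith) (hxc.mono (hIcisub 0 t₁ le_rfl)) hx0 hxt₁
    -- x is nonnegative on [-τ, ts]
    have hxnnloc : ∀ s, -τ ≤ s → s ≤ ts → 0 ≤ x s := by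
      intro s hs1 hs2
      rcases lt_or_ge s 0 with h | h
      · exact hxinit s ⟨hs1, h⟩
      · exact hxge s ⟨h, hs2⟩
    -- monotone integrating factor
    set g : ℝ → ℝ := fun t => x t * Real.exp (D t) with hg
    have hgmono : MonotoneOn g (Icc 0 ts) := by
      apply monotoneOn_Icc_aux (F' := fun t => f t * Real.exp (D t) +
        x t * (Real.exp (D t) * δc t))
      · exact ((hxc.mono (hIcisub 0 ts le_rfl)).mul
          ((hDcont.rexp).continuousOn))
      · intro t ht
        exact (hxderiv t ht.1).mul ((hDderiv t).exp)
      · intro t ht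
        have hδct : δc t = δ t := by simp [hδc, max_eq_left ht.1.le]
        have hkey : f t * Real.exp (D t) + x t * (Real.exp (D t) * δc t) =
            (∑ j, p j t * x (t - τd j t) * Real.exp (-(a j t * x (t - σd j t)))) *
              Real.exp (D t) := by
          rw [hδct]; simp only [hf]; ring
        rw [hkey]
        apply mul_nonneg _ (Real.exp_pos _).le
        apply Finset.sum_nonneg
        intro j _
        have harg : 0 ≤ x (t - τd j t) := by
          apply hxnnloc _ _ (by linarith [(hdelnn j t ht.1.le).1, ht.2])
          have h1 := (hτub j t ht.1.le).1
          have h2 := ht.1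
          linarith
        have hpj := (hp j).2 t ht.1.le
        exact mul_nonneg (mul_nonneg hpj.le harg) (Real.exp_pos _).le
    have h1 : g 0 ≤ g ts := hgmono (left_mem_Icc.mpr (by linarith [hts.1]))
      (right_mem_Icc.mpr (by linarith [hts.1])) (by linarith [hts.1])
    have h2 : g ts = 0 := by simp [hg, hxts]
    have h3 : 0 < g 0 := mul_pos hx0 (Real.exp_pos _)
    linarith
  have hxnn : ∀ s, -τ ≤ s → 0 ≤ x s := by
    intro s hs
    rcases lt_or_ge s 0 with h | h
    · exact hxinit s ⟨hs, h⟩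
    · exact (hxpos s h).le
  have hargτ : ∀ (j : Fin m), ∀ t ≥ (0:ℝ), -τ ≤ t - τd j t ∧ -τ ≤ t - σd j t := by
    intro j t ht
    constructor
    · linarith [(hτub j t ht).1]
    · linarith [(hτub j t ht).2]
  have hsum_ub : ∀ t ≥ (0:ℝ), ∀ Mx K : ℝ, 0 ≤ K →
      (∀ j : Fin m, x (t - τd j t) ≤ Mx) → (∀ j : Fin m, K ≤ x (t - σd j t)) →
      (∑ j, p j t * x (t - τd j t) * Real.exp (-(a j t * x (t - σd j t)))) ≤
        P t * (Mx * Real.exp (-(aminus * K))) := by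
    intro t ht Mx K hK hMx hKle
    rw [hP, Finset.sum_mul]
    apply Finset.sum_le_sum
    intro j _
    have h1 : 0 ≤ x (t - τd j t) := hxnn _ (hargτ j t ht).1
    have h2 : aminus * K ≤ a j t * x (t - σd j t) :=
      mul_le_mul (hamem j t ht).1 (hKle j) hK
        ((lt_of_lt_of_le haminus_pos (hamem j t ht).1).le)
    have h3 : Real.exp (-(a j t * x (t - σd j t))) ≤ Real.exp (-(aminus * K)) :=
      Real.exp_le_exp.mpr (by linarith)
    have hp0 : 0 ≤ p j t := ((hp j).2 t ht).le
    calc p j t * x (t - τd j t) * Real.exp (-(a j t * x (t - σd j t)))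
        ≤ p j t * Mx * Real.exp (-(aminus * K)) :=
          mul_le_mul (mul_le_mul le_rfl (hMx j) h1 hp0) h3 (Real.exp_pos _).le
            (mul_nonneg hp0 (h1.trans (hMx j)))
      _ = p j t * (Mx * Real.exp (-(aminus * K))) := by ring
  have hsum_lb : ∀ t ≥ (0:ℝ), ∀ mx E : ℝ, 0 ≤ mx →
      (∀ j : Fin m, mx ≤ x (t - τd j t)) → (∀ j : Fin m, a j t * x (t - σd j t) ≤ E) →
      P t * (mx * Real.exp (-E)) ≤
        ∑ j, p j t * x (t - τd j t) * Real.exp (-(a j t * x (t - σd j t))) := by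
    intro t ht mx E hmx hm hE
    rw [hP, Finset.sum_mul]
    apply Finset.sum_le_sum
    intro j _
    have h3 : Real.exp (-E) ≤ Real.exp (-(a j t * x (t - σd j t))) :=
      Real.exp_le_exp.mpr (by linarith [hE j])
    have hp0 : 0 ≤ p j t := ((hp j).2 t ht).le
    calc p j t * (mx * Real.exp (-E)) = p j t * mx * Real.exp (-E) := by ring
      _ ≤ p j t * x (t - τd j t) * Real.exp (-(a j t * x (t - σd j t))) :=
          mul_le_mul (mul_le_mul le_rfl (hm j) hmx hp0) h3 (Real.exp_pos _).le
            (mul_nonneg hp0 (hmx.trans (hm j)))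
  have hPnn : ∀ t ≥ (0:ℝ), 0 ≤ P t := by
    intro t ht
    exact Finset.sum_nonneg fun j _ => ((hp j).2 t ht).le
  -- δ facts, D function
  have hδpos : ∀ t ≥ (0:ℝ), 0 < δ t := hδ.2
  -- r facts
  have hrposev : ∀ᶠ t in atTop, 0 < r t := by
    filter_upwards [eventually_ge_atTop (0:ℝ)] with t ht
    exact div_pos (Finset.sum_pos (fun j _ => (hp j).2 t ht) Finset.univ_nonempty)
      (hδpos t ht)
  have hbddge : IsBoundedUnder (· ≥ ·) atTop r :=
    isBoundedUnder_of_eventually_ge (a := 0)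
      (by filter_upwards [hrposev] with t ht using ht.le)
  have hα1 : 1 < α := hα ▸ hA1.1
  have hγα : α ≤ γ := by
    rw [hα, hγ]; exact liminf_le_limsup hA1.2 hbddge
  have hγ1 : 1 < γ := lt_of_lt_of_le hα1 hγα
  -- the right-hand side of the equation
  -- L is not ⊤
  have hLnetop : L ≠ ⊤ := by
    intro htop
    have hxtop : Tendsto x atTop atTop := by
      rw [htop, EReal.tendsto_nhds_top_iff_real] at hL
      rw [tendsto_atTop]
      intro b
      filter_upwards [hL b] with t hb
      exact_mod_cast hb.le
    have hγ1' : (0:ℝ) < γ + 1 := by linarith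
    set K : ℝ := Real.log (γ + 1) / aminus + 1 with hK
    have hlogpos : 0 < Real.log (γ + 1) := Real.log_pos (by linarith)
    have hKpos : 0 < K := by rw [hK]; positivity
    have hKey : (γ + 1) * Real.exp (-(aminus * K)) < 1 := by
      have h1 : aminus * K = Real.log (γ + 1) + aminus := by
        rw [hK]; field_simp
      rw [h1, neg_add, Real.exp_add, Real.exp_neg, Real.exp_log hγ1',
        ← mul_assoc, mul_inv_cancel₀ (ne_of_gt hγ1'), one_mul]
      calc Real.exp (-aminus) < Real.exp 0 := Real.exp_lt_exp.mpr (by linarith)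
        _ = 1 := Real.exp_zero
    have hrev : ∀ᶠ t in atTop, r t < γ + 1 :=
      eventually_lt_of_limsup_lt (by rw [← hγ]; linarith) hA1.2
    obtain ⟨T, hT⟩ := eventually_atTop.mp
      ((hrev.and (hxtop.eventually_ge_atTop K)).and (eventually_ge_atTop (1:ℝ)))
    have hT1 : (1:ℝ) ≤ T := (hT T le_rfl).2
    set A : ℝ := T + τ with hA
    have hTA : T ≤ A := by rw [hA]; linarith
    have hApos : (0:ℝ) < A := by rw [hA]; linarith
    have hsub : Icc T A ⊆ Ici (-τ) := hIcisub T A (by linarith)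
    obtain ⟨s0, hs0mem, hs0max⟩ :=
      isCompact_Icc.exists_isMaxOn (nonempty_Icc.mpr hTA) (hxc.mono hsub)
    set c : ℝ := x s0 + 1 with hc
    have hcpos : 0 < c := by
      have := hxnn s0 (hsub hs0mem); rw [hc]; linarith
    obtain ⟨B, hBc, hBA⟩ :=
      ((hxtop.eventually_ge_atTop c).and (eventually_ge_atTop A)).exists
    have hxAlt : x A < c := by
      have h : x A ≤ x s0 := hs0max (right_mem_Icc.mpr hTA)
      rw [hc]; linarith
    obtain ⟨ts, htsmem, htsc, htsle⟩ := first_hit_up hBA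
      (hxc.mono (hIcisub A B hApos.le)) hxAlt hBc
    have htspos : 0 < ts := lt_trans hApos htsmem.1
    have hge : 0 ≤ f ts := deriv_nonneg_of_max_left htsmem.1 (hxderiv ts htspos)
      (fun s hs => (htsle s hs).trans_eq htsc.symm)
    have hts0 : (0:ℝ) ≤ ts := htspos.le
    have htsT : T ≤ ts := le_trans (by linarith) htsmem.1.le
    have hτargle : ∀ j : Fin m, x (ts - τd j ts) ≤ c := by
      intro j
      have h1 : ts - τd j ts ≤ ts := by linarith [(hdelnn j ts hts0).1]
      have h2 : T ≤ ts - τd j ts := by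
        have := (hτub j ts hts0).1
        have := htsmem.1
        rw [hA] at *
        linarith
      rcases le_or_gt (ts - τd j ts) A with h | h
      · exact le_trans (hs0max ⟨h2, h⟩) (by rw [hc]; linarith)
      · exact htsle _ ⟨h.le, h1⟩
    have hσargK : ∀ j : Fin m, K ≤ x (ts - σd j ts) := by
      intro j
      have h2 : T ≤ ts - σd j ts := by
        have := (hτub j ts hts0).2
        have := htsmem.1
        rw [hA] at *
        linarith
      exact ((hT _ h2).1).2
    have hub := hsum_ub ts hts0 c K hKpos.le hτargle hσargK
    have hrts : r ts < γ + 1 := ((hT ts htsT).1).1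
    have hδts := hδpos' ts hts0
    have hPts : P ts < (γ + 1) * δ ts := by
      rw [hr] at hrts
      exact (div_lt_iff₀ hδts).mp hrts
    have hfts : f ts =
        (∑ j, p j ts * x (ts - τd j ts) * Real.exp (-(a j ts * x (ts - σd j ts)))) -
          δ ts * x ts := rfl
    have hepos : (0:ℝ) < Real.exp (-(aminus * K)) := Real.exp_pos _
    have h5 : (∑ j, p j ts * x (ts - τd j ts) * Real.exp (-(a j ts * x (ts - σd j ts)))) ≤
        (γ + 1) * δ ts * (c * Real.exp (-(aminus * K))) :=
      le_trans hub (mul_le_mul_of_nonneg_right hPts.le (by positivity))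
    have h6 : (γ + 1) * δ ts * (c * Real.exp (-(aminus * K))) < δ ts * c := by
      have h := mul_lt_mul_of_pos_right hKey (mul_pos hδts hcpos)
      calc (γ + 1) * δ ts * (c * Real.exp (-(aminus * K)))
          = (γ + 1) * Real.exp (-(aminus * K)) * (δ ts * c) := by ring
        _ < 1 * (δ ts * c) := h
        _ = δ ts * c := one_mul _
    have h7 : δ ts * x ts = δ ts * c := by rw [htsc]
    linarith [hge, hfts.le, hfts.ge, h5, h6, h7]
  have hLnebot : L ≠ ⊥ := by
    intro hbot
    have h0le : (0:EReal) ≤ L := by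
      apply ge_of_tendsto hL
      filter_upwards [eventually_ge_atTop (0:ℝ)] with t ht
      exact_mod_cast hxnn t (le_trans (neg_nonpos.mpr hτnn) ht)
    rw [hbot] at h0le
    exact absurd h0le (by simp)
  set Lr : ℝ := L.toReal with hLr
  have hLeq : L = (Lr : EReal) := (EReal.coe_toReal hLnetop hLnebot).symm
  have hxLr : Tendsto x atTop (nhds Lr) := by
    rw [hLeq] at hL
    exact EReal.tendsto_coe.mp hL
  have hLrnn : 0 ≤ Lr := by
    apply ge_of_tendsto hxLr
    filter_upwards [eventually_ge_atTop (0:ℝ)] with t ht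
    exact hxnn t (le_trans (neg_nonpos.mpr hτnn) ht)
  -- Lr > 0
  have hLrpos : 0 < Lr := by
    rcases hLrnn.lt_or_eq with h | h
    · exact h
    have hx0' : Tendsto x atTop (nhds 0) := by rwa [← h] at hxLr
    set α' : ℝ := (1 + α) / 2 with hα'
    have hα'1 : 1 < α' := by rw [hα']; linarith
    have hα'pos : 0 < α' := by linarith
    have hα'α : α' < α := by rw [hα']; linarith
    have hαev : ∀ᶠ t in atTop, α' < r t :=
      eventually_lt_of_lt_liminf (by rw [← hα]; exact hα'α) hbddge
    have hlogpos : 0 < Real.log α' := Real.log_pos hα'1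
    set ε : ℝ := Real.log α' / (2 * aplus) with hε
    have hεpos : 0 < ε := by rw [hε]; positivity
    have hKey : 1 < α' * Real.exp (-(aplus * ε)) := by
      have h1 : aplus * ε = Real.log α' / 2 := by
        rw [hε]; field_simp
      have h2 : α' * Real.exp (-(Real.log α' / 2)) =
          Real.exp (Real.log α' + -(Real.log α' / 2)) := by
        rw [Real.exp_add, Real.exp_log hα'pos]
      have h3 : Real.log α' + -(Real.log α' / 2) = Real.log α' / 2 := by ring
      rw [h1, h2, h3]
      calc (1:ℝ) = Real.exp 0 := Real.exp_zero.symm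
        _ < Real.exp (Real.log α' / 2) := Real.exp_lt_exp.mpr (by linarith)
    obtain ⟨T, hT⟩ := eventually_atTop.mp
      ((hαev.and (hx0'.eventually (ge_mem_nhds hεpos))).and (eventually_ge_atTop (1:ℝ)))
    have hT1 : (1:ℝ) ≤ T := (hT T le_rfl).2
    set A : ℝ := T + τ with hA
    have hTA : T ≤ A := by rw [hA]; linarith
    have hApos : (0:ℝ) < A := by rw [hA]; linarith
    have hsub : Icc T A ⊆ Ici (-τ) := hIcisub T A (by linarith)
    obtain ⟨s0, hs0mem, hs0min⟩ :=
      isCompact_Icc.exists_isMinOn (nonempty_Icc.mpr hTA) (hxc.mono hsub)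
    set μ : ℝ := x s0 with hμ
    have hμpos : 0 < μ := hxpos s0 (by linarith [hs0mem.1])
    obtain ⟨B, hBc, hBA⟩ :=
      ((hx0'.eventually (ge_mem_nhds (half_pos hμpos))).and (eventually_ge_atTop A)).exists
    have hxAgt : μ / 2 < x A := by
      have hh : x s0 ≤ x A := hs0min (right_mem_Icc.mpr hTA)
      rw [← hμ] at hh; linarith
    obtain ⟨ts, htsmem, htsc, htsge⟩ := first_hit_down hBA
      (hxc.mono (hIcisub A B hApos.le)) hxAgt hBc
    have htspos : 0 < ts := lt_trans hApos htsmem.1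
    have hts0 : (0:ℝ) ≤ ts := htspos.le
    have htsT : T ≤ ts := le_trans (by linarith) htsmem.1.le
    have hle : f ts ≤ 0 := deriv_nonpos_of_min_left htsmem.1 (hxderiv ts htspos)
      (fun s hs => htsc.symm ▸ htsge s hs)
    have hmxj : ∀ j : Fin m, μ / 2 ≤ x (ts - τd j ts) := by
      intro j
      have h1 : ts - τd j ts ≤ ts := by linarith [(hdelnn j ts hts0).1]
      have h2 : T ≤ ts - τd j ts := by
        have := (hτub j ts hts0).1
        have := htsmem.1
        rw [hA] at *
        linarith
      rcases le_or_gt (ts - τd j ts) A with hh | hh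
      · have hthis : x s0 ≤ x (ts - τd j ts) := hs0min (⟨h2, hh⟩ : ts - τd j ts ∈ Icc T A)
        linarith [hμ.le, hμ.ge]
      · exact htsge _ ⟨hh.le, h1⟩
    have hEj : ∀ j : Fin m, a j ts * x (ts - σd j ts) ≤ aplus * ε := by
      intro j
      have h2 : T ≤ ts - σd j ts := by
        have := (hτub j ts hts0).2
        have := htsmem.1
        rw [hA] at *
        linarith
      have hxσ : x (ts - σd j ts) ≤ ε := ((hT _ h2).1).2
      exact mul_le_mul (hamem j ts hts0).2 hxσ (hxnn _ (hargτ j ts hts0).2) haplus_pos.le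
    have hlb := hsum_lb ts hts0 (μ / 2) (aplus * ε) (half_pos hμpos).le hmxj hEj
    have hrts : α' < r ts := ((hT ts htsT).1).1
    have hδts := hδpos' ts hts0
    have hPts : α' * δ ts < P ts := by
      rw [hr] at hrts
      exact (lt_div_iff₀ hδts).mp hrts
    have hfts : f ts =
        (∑ j, p j ts * x (ts - τd j ts) * Real.exp (-(a j ts * x (ts - σd j ts)))) -
          δ ts * x ts := rfl
    have hepos : (0:ℝ) < Real.exp (-(aplus * ε)) := Real.exp_pos _
    have h5 : α' * δ ts * (μ / 2 * Real.exp (-(aplus * ε))) ≤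
        P ts * (μ / 2 * Real.exp (-(aplus * ε))) :=
      mul_le_mul_of_nonneg_right hPts.le (by positivity)
    have h6 : δ ts * (μ / 2) < α' * δ ts * (μ / 2 * Real.exp (-(aplus * ε))) := by
      have hh := mul_lt_mul_of_pos_right hKey (mul_pos hδts (half_pos hμpos))
      calc δ ts * (μ / 2) = 1 * (δ ts * (μ / 2)) := (one_mul _).symm
        _ < α' * Real.exp (-(aplus * ε)) * (δ ts * (μ / 2)) := hh
        _ = α' * δ ts * (μ / 2 * Real.exp (-(aplus * ε))) := by ring
    have h7 : δ ts * x ts = δ ts * (μ / 2) := by rw [htsc]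
    linarith [hle, hfts.le, hfts.ge, hlb, h5, h6, h7]
  -- lower bound : log α ≤ aplus * Lr
  have hlower : Real.log α ≤ aplus * Lr := by
    by_contra hcon
    push_neg at hcon
    have hαpos : (0:ℝ) < α := by linarith
    have hKey0 : 1 < α * Real.exp (-(aplus * Lr)) := by
      have h1 : Real.exp (aplus * Lr) < α := by
        calc Real.exp (aplus * Lr) < Real.exp (Real.log α) := Real.exp_lt_exp.mpr hcon
          _ = α := Real.exp_log hαpos
      have h2 := mul_lt_mul_of_pos_right h1 (Real.exp_pos (-(aplus * Lr)))
      rwa [← Real.exp_add, add_neg_cancel, Real.exp_zero] at h2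
    set φ : ℝ → ℝ := fun ε =>
      (α - ε) * ((Lr - ε) * Real.exp (-(aplus * (Lr + ε)))) - (Lr + ε) with hφ
    have hφ0 : 0 < φ 0 := by
      have heq : φ 0 = Lr * (α * Real.exp (-(aplus * Lr)) - 1) := by
        rw [hφ]; simp only [sub_zero, add_zero]; ring
      rw [heq]
      exact mul_pos hLrpos (by linarith)
    have hφc : Continuous φ := by
      rw [hφ]
      exact ((continuous_const.sub continuous_id).mul
        ((continuous_const.sub continuous_id).mul
          (Real.continuous_exp.comp
            ((continuous_const.mul (continuous_const.add continuous_id)).neg)))).sub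
        (continuous_const.add continuous_id)
    obtain ⟨ε, hεpos, hεLr, hφε⟩ : ∃ ε : ℝ, 0 < ε ∧ ε < Lr ∧ 0 < φ ε := by
      have h1 : ∀ᶠ ε in nhds (0:ℝ), 0 < φ ε :=
        hφc.continuousAt.eventually (eventually_gt_nhds hφ0)
      have h2 : ∀ᶠ ε in nhdsWithin (0:ℝ) (Ioi 0), 0 < φ ε :=
        eventually_nhdsWithin_of_eventually_nhds h1
      have h3 : ∀ᶠ ε in nhdsWithin (0:ℝ) (Ioi 0), 0 < ε ∧ ε < Lr := by
        filter_upwards [Ioo_mem_nhdsGT_of_mem (⟨le_rfl, hLrpos⟩ : (0:ℝ) ∈ Ico 0 Lr)]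
          with ε hε using ⟨hε.1, hε.2⟩
      obtain ⟨ε, hφε, hεpos, hεLr⟩ := (h2.and h3).exists
      exact ⟨ε, hεpos, hεLr, hφε⟩
    have hev1 : ∀ᶠ t in atTop, α - ε < r t :=
      eventually_lt_of_lt_liminf (by rw [← hα]; linarith) hbddge
    have hev2 : ∀ᶠ t in atTop, x t ∈ Ioo (Lr - ε) (Lr + ε) :=
      hxLr.eventually (Ioo_mem_nhds (by linarith) (by linarith))
    obtain ⟨T, hT⟩ := eventually_atTop.mp ((hev1.and hev2).and (eventually_ge_atTop (1:ℝ)))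
    have hT1 : (1:ℝ) ≤ T := (hT T le_rfl).2
    set A : ℝ := T + τ with hA
    have hApos : (0:ℝ) < A := by rw [hA]; linarith
    have hmono : MonotoneOn (fun t => x t - φ ε * D t) (Ici A) := by
      apply monotoneOn_aux (F' := fun t => f t - φ ε * δc t)
      · exact (hxc.mono (Ici_subset_Ici.mpr (by linarith))).sub
          ((continuous_const.mul hDcont).continuousOn)
      · intro t ht
        exact (hxderiv t (lt_trans hApos ht)).sub ((hDderiv t).const_mul (φ ε))
      · intro t ht
        have htA : A < t := ht
        have ht0 : (0:ℝ) ≤ t := by linarith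
        have htT : T ≤ t := by rw [hA] at htA; linarith
        have hδct : δc t = δ t := by simp [hδc, max_eq_left ht0]
        have hδt := hδpos' t ht0
        have hmxj : ∀ j : Fin m, Lr - ε ≤ x (t - τd j t) := by
          intro j
          have h2 : T ≤ t - τd j t := by
            have := (hτub j t ht0).1; rw [hA] at htA; linarith
          exact (((hT _ h2).1).2).1.le
        have hEj : ∀ j : Fin m, a j t * x (t - σd j t) ≤ aplus * (Lr + ε) := by
          intro j
          have h2 : T ≤ t - σd j t := by
            have := (hτub j t ht0).2; rw [hA] at htA; linarith
          exact mul_le_mul (hamem j t ht0).2 ((((hT _ h2).1).2).2).le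
            (hxnn _ (hargτ j t ht0).2) haplus_pos.le
        have hlb := hsum_lb t ht0 (Lr - ε) (aplus * (Lr + ε)) (by linarith) hmxj hEj
        have hrt : α - ε < r t := ((hT t htT).1).1
        have hPt : (α - ε) * δ t < P t := by
          rw [hr] at hrt
          exact (lt_div_iff₀ hδt).mp hrt
        have h5 : (α - ε) * δ t * ((Lr - ε) * Real.exp (-(aplus * (Lr + ε)))) ≤
            P t * ((Lr - ε) * Real.exp (-(aplus * (Lr + ε)))) :=
          mul_le_mul_of_nonneg_right hPt.le
            (mul_nonneg (by linarith) (Real.exp_pos _).le)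
        have hxt : x t < Lr + ε := (((hT t htT).1).2).2
        have h6 : δ t * x t ≤ δ t * (Lr + ε) := mul_le_mul_of_nonneg_left hxt.le hδt.le
        have hφrel : (α - ε) * δ t * ((Lr - ε) * Real.exp (-(aplus * (Lr + ε)))) -
            δ t * (Lr + ε) = δ t * φ ε := by rw [hφ]; ring
        have hfteq : f t =
            (∑ j, p j t * x (t - τd j t) * Real.exp (-(a j t * x (t - σd j t)))) -
              δ t * x t := rfl
        rw [hδct]
        have hφδ : 0 ≤ δ t * φ ε := mul_nonneg hδt.le hφε.le
        linarith [hlb, h5, h6, hφrel, hfteq.le, hfteq.ge, hφδ]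
    have hbound : ∀ t, A ≤ t → x A - φ ε * D A + φ ε * D t ≤ x t := by
      intro t ht
      have := hmono (self_mem_Ici) (mem_Ici.mpr ht) ht
      simp only at this
      linarith
    obtain ⟨t, ht⟩ := ((hDtop.eventually_ge_atTop
      ((Lr + ε - (x A - φ ε * D A)) / φ ε)).and (eventually_ge_atTop (max A T))).exists
    have htA : A ≤ t := le_trans (le_max_left A T) ht.2
    have htT : T ≤ t := le_trans (le_max_right A T) ht.2
    have h8 : Lr + ε - (x A - φ ε * D A) ≤ φ ε * D t := by
      have h := ht.1
      rw [div_le_iff₀ hφε] at h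
      linarith
    have h9 := hbound t htA
    have h10 : x t < Lr + ε := (((hT t htT).1).2).2
    linarith
  -- upper bound : aminus * Lr ≤ log γ
  have hupper : aminus * Lr ≤ Real.log γ := by
    by_contra hcon
    push_neg at hcon
    have hγpos : (0:ℝ) < γ := by linarith
    have hKey0 : γ * Real.exp (-(aminus * Lr)) < 1 := by
      have h1 : γ < Real.exp (aminus * Lr) := by
        calc γ = Real.exp (Real.log γ) := (Real.exp_log hγpos).symm
          _ < Real.exp (aminus * Lr) := Real.exp_lt_exp.mpr hcon
      have h2 := mul_lt_mul_of_pos_right h1 (Real.exp_pos (-(aminus * Lr)))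
      rwa [← Real.exp_add, add_neg_cancel, Real.exp_zero] at h2
    set ψ : ℝ → ℝ := fun ε =>
      (γ + ε) * ((Lr + ε) * Real.exp (-(aminus * (Lr - ε)))) - (Lr - ε) with hψ
    have hψ0 : ψ 0 < 0 := by
      have heq : ψ 0 = Lr * (γ * Real.exp (-(aminus * Lr)) - 1) := by
        rw [hψ]; simp only [sub_zero, add_zero]; ring
      rw [heq]
      exact mul_neg_of_pos_of_neg hLrpos (by linarith)
    have hψc : Continuous ψ := by
      rw [hψ]
      exact ((continuous_const.add continuous_id).mul
        ((continuous_const.add continuous_id).mul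
          (Real.continuous_exp.comp
            ((continuous_const.mul (continuous_const.sub continuous_id)).neg)))).sub
        (continuous_const.sub continuous_id)
    obtain ⟨ε, hεpos, hεLr, hψε⟩ : ∃ ε : ℝ, 0 < ε ∧ ε < Lr ∧ ψ ε < 0 := by
      have h1 : ∀ᶠ ε in nhds (0:ℝ), ψ ε < 0 :=
        hψc.continuousAt.eventually (eventually_lt_nhds hψ0)
      have h2 : ∀ᶠ ε in nhdsWithin (0:ℝ) (Ioi 0), ψ ε < 0 :=
        eventually_nhdsWithin_of_eventually_nhds h1
      have h3 : ∀ᶠ ε in nhdsWithin (0:ℝ) (Ioi 0), 0 < ε ∧ ε < Lr := by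
        filter_upwards [Ioo_mem_nhdsGT_of_mem (⟨le_rfl, hLrpos⟩ : (0:ℝ) ∈ Ico 0 Lr)]
          with ε hε using ⟨hε.1, hε.2⟩
      obtain ⟨ε, hψε, hεpos, hεLr⟩ := (h2.and h3).exists
      exact ⟨ε, hεpos, hεLr, hψε⟩
    have hev1 : ∀ᶠ t in atTop, r t < γ + ε :=
      eventually_lt_of_limsup_lt (by rw [← hγ]; linarith) hA1.2
    have hev2 : ∀ᶠ t in atTop, x t ∈ Ioo (Lr - ε) (Lr + ε) :=
      hxLr.eventually (Ioo_mem_nhds (by linarith) (by linarith))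
    obtain ⟨T, hT⟩ := eventually_atTop.mp ((hev1.and hev2).and (eventually_ge_atTop (1:ℝ)))
    have hT1 : (1:ℝ) ≤ T := (hT T le_rfl).2
    set A : ℝ := T + τ with hA
    have hApos : (0:ℝ) < A := by rw [hA]; linarith
    have hanti : AntitoneOn (fun t => x t - ψ ε * D t) (Ici A) := by
      apply antitoneOn_aux (F' := fun t => f t - ψ ε * δc t)
      · exact (hxc.mono (Ici_subset_Ici.mpr (by linarith))).sub
          ((continuous_const.mul hDcont).continuousOn)
      · intro t ht
        exact (hxderiv t (lt_trans hApos ht)).sub ((hDderiv t).const_mul (ψ ε))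
      · intro t ht
        have htA : A < t := ht
        have ht0 : (0:ℝ) ≤ t := by linarith
        have htT : T ≤ t := by rw [hA] at htA; linarith
        have hδct : δc t = δ t := by simp [hδc, max_eq_left ht0]
        have hδt := hδpos' t ht0
        have hMxj : ∀ j : Fin m, x (t - τd j t) ≤ Lr + ε := by
          intro j
          have h2 : T ≤ t - τd j t := by
            have := (hτub j t ht0).1; rw [hA] at htA; linarith
          exact ((((hT _ h2).1).2).2).le
        have hKj : ∀ j : Fin m, Lr - ε ≤ x (t - σd j t) := by
          intro j
          have h2 : T ≤ t - σd j t := by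
            have := (hτub j t ht0).2; rw [hA] at htA; linarith
          exact ((((hT _ h2).1).2).1).le
        have hub := hsum_ub t ht0 (Lr + ε) (Lr - ε) (by linarith) hMxj hKj
        have hrt : r t < γ + ε := ((hT t htT).1).1
        have hPt : P t < (γ + ε) * δ t := by
          rw [hr] at hrt
          exact (div_lt_iff₀ hδt).mp hrt
        have h5 : P t * ((Lr + ε) * Real.exp (-(aminus * (Lr - ε)))) ≤
            (γ + ε) * δ t * ((Lr + ε) * Real.exp (-(aminus * (Lr - ε)))) :=
          mul_le_mul_of_nonneg_right hPt.le
            (mul_nonneg (by linarith) (Real.exp_pos _).le)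
        have hxt : Lr - ε < x t := (((hT t htT).1).2).1
        have h6 : δ t * (Lr - ε) ≤ δ t * x t := mul_le_mul_of_nonneg_left hxt.le hδt.le
        have hψrel : (γ + ε) * δ t * ((Lr + ε) * Real.exp (-(aminus * (Lr - ε)))) -
            δ t * (Lr - ε) = δ t * ψ ε := by rw [hψ]; ring
        have hfteq : f t =
            (∑ j, p j t * x (t - τd j t) * Real.exp (-(a j t * x (t - σd j t)))) -
              δ t * x t := rfl
        rw [hδct]
        have hψδ : δ t * ψ ε ≤ 0 := mul_nonpos_of_nonneg_of_nonpos hδt.le hψε.le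
        linarith [hub, h5, h6, hψrel, hfteq.le, hfteq.ge, hψδ]
    have hbound : ∀ t, A ≤ t → x t ≤ x A - ψ ε * D A + ψ ε * D t := by
      intro t ht
      have := hanti (self_mem_Ici) (mem_Ici.mpr ht) ht
      simp only at this
      linarith
    have hψneg : 0 < -ψ ε := by linarith
    have hψD : Tendsto (fun t => ψ ε * D t) atTop atBot := by
      have h := hDtop.const_mul_atTop hψneg
      have heq : (fun t => ψ ε * D t) = (fun t => -(-ψ ε * D t)) := by
        funext t; ring
      rw [heq]
      exact tendsto_neg_atTop_atBot.comp h
    obtain ⟨t, ht⟩ := ((hψD.eventually_le_atBot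
      (-(x A - ψ ε * D A) - 1)).and (eventually_ge_atTop (max A 0))).exists
    have htA : A ≤ t := le_trans (le_max_left A 0) ht.2
    have ht0 : (0:ℝ) ≤ t := le_trans (le_max_right A 0) ht.2
    have h8 : ψ ε * D t ≤ -(x A - ψ ε * D A) - 1 := ht.1
    have h9 := hbound t htA
    have h10 : 0 ≤ x t := hxnn t (by linarith)
    linarith
  refine ⟨Lr, hLeq, ?_, ?_⟩
  · rw [one_div]
    have h := mul_le_mul_of_nonneg_left hlower
      (le_of_lt (inv_pos.mpr haplus_pos))
    rwa [← mul_assoc, inv_mul_cancel₀ (ne_of_gt haplus_pos), one_mul] at h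
  · rw [one_div]
    have h := mul_le_mul_of_nonneg_left hupper
      (le_of_lt (inv_pos.mpr haminus_pos))
    rwa [← mul_assoc, inv_mul_cancel₀ (ne_of_gt haminus_pos), one_mul] at h
end
end

section
/- Assume (A0), (A1), (A3) and (K1). If x is a positive solution of equation (*) such that L := lim_{t→∞} x(t) exists, then L = K. -/
open Real Filter MeasureTheory Set

noncomputable section

open Topology

private lemma nich_gap1 {aa c C K M : ℝ} (hc0 : 0 ≤ c) (hc : c ≤ aa) (haC : aa ≤ C)
    (hK : 0 ≤ K) (hKM : K ≤ M) :
    Real.exp (-(C*K)) * (1 - Real.exp (-(c*(M-K)))) ≤ Real.exp (-(aa*K)) - Real.exp (-(aa*M)) := by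
  have h1 : Real.exp (-(aa*M)) = Real.exp (-(aa*K)) * Real.exp (-(aa*(M-K))) := by
    rw [← Real.exp_add]; ring_nf
  have e1 : Real.exp (-(C*K)) ≤ Real.exp (-(aa*K)) := Real.exp_le_exp.2 (by nlinarith)
  have e2 : Real.exp (-(aa*(M-K))) ≤ Real.exp (-(c*(M-K))) :=
    Real.exp_le_exp.2 (by nlinarith)
  have e3 : 0 ≤ 1 - Real.exp (-(c*(M-K))) := by
    have : Real.exp (-(c*(M-K))) ≤ 1 := Real.exp_le_one_iff.2 (by nlinarith)
    linarith
  have := mul_le_mul e1 (by linarith : 1 - Real.exp (-(c*(M-K))) ≤ 1 - Real.exp (-(aa*(M-K))))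
    e3 (Real.exp_pos _).le
  rw [h1]; nlinarith [this]

private lemma nich_gap2 {aa c C K M : ℝ} (hc0 : 0 ≤ c) (hc : c ≤ aa) (haC : aa ≤ C)
    (hM : 0 ≤ M) (hMK : M ≤ K) :
    Real.exp (-(C*K)) * (Real.exp (c*(K-M)) - 1) ≤ Real.exp (-(aa*M)) - Real.exp (-(aa*K)) := by
  have hK : 0 ≤ K := hM.trans hMK
  have h1 : Real.exp (-(aa*M)) = Real.exp (-(aa*K)) * Real.exp (aa*(K-M)) := by
    rw [← Real.exp_add]; ring_nf
  have e1 : Real.exp (-(C*K)) ≤ Real.exp (-(aa*K)) := Real.exp_le_exp.2 (by nlinarith)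
  have e2 : Real.exp (c*(K-M)) ≤ Real.exp (aa*(K-M)) := Real.exp_le_exp.2 (by nlinarith)
  have e3 : 0 ≤ Real.exp (c*(K-M)) - 1 := by
    have : (1:ℝ) ≤ Real.exp (c*(K-M)) := Real.one_le_exp (by nlinarith)
    linarith
  have := mul_le_mul e1 (by linarith : Real.exp (c*(K-M)) - 1 ≤ Real.exp (aa*(K-M)) - 1)
    e3 (Real.exp_pos _).le
  rw [h1]; nlinarith [this]

private lemma nich_ftc {x F : ℝ → ℝ} (hxc : ContinuousOn x (Ici (0:ℝ)))
    (hFc : ContinuousOn F (Ici (0:ℝ)))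
    (hd : ∀ t ≥ (0:ℝ), HasDerivWithinAt x (F t) (Ici 0) t)
    {u v : ℝ} (hu : 0 ≤ u) (huv : u ≤ v) :
    ∫ s in u..v, F s = x v - x u := by
  have hsub : Icc u v ⊆ Ici (0:ℝ) := fun s hs => hu.trans hs.1
  refine intervalIntegral.integral_eq_sub_of_hasDeriv_right_of_le huv (hxc.mono hsub)
    (fun t ht => (hd t (hu.trans ht.1.le)).mono fun s hs => le_of_lt
      (lt_of_le_of_lt (hu.trans ht.1.le) hs)) ?_
  have : ContinuousOn F (uIcc u v) := by rw [uIcc_of_le huv]; exact hFc.mono hsub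
  exact this.intervalIntegrable

private lemma first_crossing {x : ℝ → ℝ} {T b : ℝ} (hc : ContinuousOn x (Ici T))
    (hT : b < x T) (hex : ∃ t, T ≤ t ∧ x t ≤ b) :
    ∃ t₀, T < t₀ ∧ x t₀ ≤ b ∧ ∀ s ∈ Ico T t₀, b < x s := by
  set S : Set ℝ := Ici T ∩ x ⁻¹' Iic b with hS
  have hScl : IsClosed S := hc.preimage_isClosed_of_isClosed isClosed_Ici isClosed_Iic
  have hSne : S.Nonempty := by obtain ⟨t, ht1, ht2⟩ := hex; exact ⟨t, ht1, ht2⟩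
  have hSbd : BddBelow S := ⟨T, fun s hs => hs.1⟩
  have hmem : sInf S ∈ S := hScl.csInf_mem hSne hSbd
  refine ⟨sInf S, ?_, hmem.2, ?_⟩
  · rcases lt_or_eq_of_le (show T ≤ sInf S from hmem.1) with h | h
    · exact h
    · exact absurd hmem.2 (by rw [← h]; exact not_le.2 hT)
  · intro s hs
    by_contra hcon
    push_neg at hcon
    exact absurd (csInf_le hSbd ⟨hs.1, hcon⟩) (not_le.2 hs.2)

private lemma nich_blowup {x F δ : ℝ → ℝ} {L η T : ℝ}
    (hxc : ContinuousOn x (Ici (0:ℝ))) (hFc : ContinuousOn F (Ici (0:ℝ)))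
    (hδc : ContinuousOn δ (Ici (0:ℝ)))
    (hd : ∀ t ≥ (0:ℝ), HasDerivWithinAt x (F t) (Ici 0) t)
    (hA3 : Filter.Tendsto (fun t => ∫ s in (0:ℝ)..t, δ s) atTop atTop)
    (hη : 0 < η) (hT : 0 ≤ T) (hb : ∀ t ≥ T, η * δ t ≤ F t)
    (hL : Tendsto x atTop (nhds L)) : False := by
  have hδint : ∀ u v : ℝ, 0 ≤ u → u ≤ v → IntervalIntegrable δ volume u v := by
    intro u v hu huv
    have : ContinuousOn δ (uIcc u v) := by
      rw [uIcc_of_le huv]; exact hδc.mono fun s hs => hu.trans hs.1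
    exact this.intervalIntegrable
  have key : ∀ t ≥ T, x T + η * ∫ s in T..t, δ s ≤ x t := by
    intro t ht
    have h1 : ∫ s in T..t, F s = x t - x T := nich_ftc hxc hFc hd hT ht
    have h2 : ∫ s in T..t, η * δ s ≤ ∫ s in T..t, F s := by
      apply intervalIntegral.integral_mono_on ht ((hδint T t hT ht).const_mul η)
      · have : ContinuousOn F (uIcc T t) := by
          rw [uIcc_of_le ht]; exact hFc.mono fun s hs => hT.trans hs.1
        exact this.intervalIntegrable
      · exact fun s hs => hb s hs.1
    rw [intervalIntegral.integral_const_mul] at h2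
    linarith
  have hsplit : ∀ t ≥ T, ∫ s in T..t, δ s = (∫ s in (0:ℝ)..t, δ s) - ∫ s in (0:ℝ)..T, δ s := by
    intro t ht
    have := intervalIntegral.integral_add_adjacent_intervals (hδint 0 T le_rfl hT)
      (hδint T t hT ht)
    linarith
  have htend : Tendsto (fun t => x T + η * ∫ s in T..t, δ s) atTop atTop := by
    apply Tendsto.congr' (f₁ := fun t => x T + η * ((∫ s in (0:ℝ)..t, δ s) - ∫ s in (0:ℝ)..T, δ s))
    · filter_upwards [eventually_ge_atTop T] with t ht
      rw [hsplit t ht]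
    · apply tendsto_atTop_add_const_left
      apply Tendsto.const_mul_atTop hη
      simpa [sub_eq_add_neg] using tendsto_atTop_add_const_right atTop
        (-(∫ s in (0:ℝ)..T, δ s)) hA3
  have : Tendsto x atTop atTop :=
    tendsto_atTop_mono' atTop (by filter_upwards [eventually_ge_atTop T] with t ht using key t ht)
      htend
  exact not_tendsto_atTop_of_tendsto_nhds hL this

/-- Under (A0), (A1), (A3) and (K1), if a positive solution of (*) converges,
its limit is the positive equilibrium `K`. -/

theorem convergent_solutions_tend_to_equilibrium
    (m : ℕ) (hm : 0 < m) (p a : Fin m → ℝ → ℝ) (δ : ℝ → ℝ)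
    (τd σd : Fin m → ℝ → ℝ) (τ : ℝ)
    (hA0 : HypA0 m p a δ τd σd) (hτ : IsMaxDelay m τd σd τ)
    (hA1 : HypA1 m p δ) (hA3 : HypA3 δ)
    (K : ℝ) (hKpos : 0 < K)
    (hK1 : ∀ t ≥ (0:ℝ), δ t = ∑ j, p j t * Real.exp (-(a j t * K)))
    (x : ℝ → ℝ) (hx : IsPosSol m p a δ τd σd τ x)
    (L : ℝ) (hL : Filter.Tendsto x Filter.atTop (nhds L)) :
    L = K := by
  obtain ⟨hxc, hxini, hx0pos, hxd⟩ := hx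
  obtain ⟨hp, ha, ⟨hδc, hδpos⟩, hdel⟩ := hA0
  set F : ℝ → ℝ := fun t =>
    (∑ j, p j t * x (t - τd j t) * Real.exp (-(a j t * x (t - σd j t)))) - δ t * x t with hF
  -- global bounds on a
  choose ac aC hacpos habnd using fun j => (ha j).2
  have hne : (Finset.univ : Finset (Fin m)).Nonempty := ⟨⟨0, hm⟩, Finset.mem_univ _⟩
  set c : ℝ := Finset.univ.inf' hne ac with hcdef
  set C : ℝ := Finset.univ.sup' hne aC with hCdef
  have hc0 : 0 < c := by
    rw [hcdef, Finset.lt_inf'_iff]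
    exact fun j _ => hacpos j
  have hca : ∀ j, ∀ t ≥ (0:ℝ), c ≤ a j t ∧ a j t ≤ C := by
    intro j t ht
    constructor
    · exact le_trans (Finset.inf'_le ac (Finset.mem_univ j)) (habnd j t ht).1
    · exact le_trans (habnd j t ht).2 (Finset.le_sup' aC (Finset.mem_univ j))
  have hC0 : 0 < C := lt_of_lt_of_le hc0 ((hca ⟨0, hm⟩ 0 le_rfl).1.trans (hca ⟨0, hm⟩ 0 le_rfl).2)
  -- delays bounded by τ, τ ≥ 0
  have hτb : ∀ j, ∀ t ≥ (0:ℝ), τd j t ≤ τ ∧ σd j t ≤ τ := by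
    intro j t ht
    exact ⟨hτ.1 ⟨j, t, ht, Or.inl rfl⟩, hτ.1 ⟨j, t, ht, Or.inr rfl⟩⟩
  have hτ0 : 0 ≤ τ := le_trans ((hdel ⟨0, hm⟩).2.2.1 0 le_rfl).1 (hτb ⟨0, hm⟩ 0 le_rfl).1
  have hIci : Ici (0:ℝ) ⊆ Ici (-τ) := Ici_subset_Ici.2 (by linarith)
  have hxc0 : ContinuousOn x (Ici (0:ℝ)) := hxc.mono hIci
  -- continuity of the delayed compositions and of F
  have hargτ : ∀ j, ∀ t ≥ (0:ℝ), -τ ≤ t - τd j t ∧ t - τd j t ≤ t := by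
    intro j t ht
    have h1 := (hτb j t ht).1
    have h2 := ((hdel j).2.2.1 t ht).1
    constructor <;> linarith
  have hargσ : ∀ j, ∀ t ≥ (0:ℝ), -τ ≤ t - σd j t ∧ t - σd j t ≤ t := by
    intro j t ht
    have h1 := (hτb j t ht).2
    have h2 := ((hdel j).2.2.1 t ht).2
    constructor <;> linarith
  have hxτc : ∀ j, ContinuousOn (fun t => x (t - τd j t)) (Ici (0:ℝ)) := by
    intro j
    apply hxc.comp (continuousOn_id.sub (hdel j).1)
    intro t ht
    exact (hargτ j t ht).1
  have hxσc : ∀ j, ContinuousOn (fun t => x (t - σd j t)) (Ici (0:ℝ)) := by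
    intro j
    apply hxc.comp (continuousOn_id.sub (hdel j).2.1)
    intro t ht
    exact (hargσ j t ht).1
  have hFc : ContinuousOn F (Ici (0:ℝ)) := by
    apply ContinuousOn.sub
    · apply continuousOn_finset_sum
      intro j _
      exact ((hp j).1.mul (hxτc j)).mul
        (Real.continuous_exp.comp_continuousOn (((ha j).1.mul (hxσc j)).neg))
    · exact hδc.mul hxc0
  -- positivity of x on [0, ∞)
  have hpos : ∀ t ≥ (0:ℝ), 0 < x t := by
    by_contra hcon
    push_neg at hcon
    obtain ⟨t₀, ht₀T, hxt₀, hmin⟩ := first_crossing (T := 0) (b := 0) hxc0 hx0pos hcon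
    -- x t₀ = 0
    have hxt₀0 : x t₀ = 0 := by
      refine le_antisymm hxt₀ ?_
      have hne' : (nhdsWithin t₀ (Ico (0:ℝ) t₀)).NeBot := by
        rw [← mem_closure_iff_nhdsWithin_neBot, closure_Ico (ne_of_lt ht₀T)]
        exact ⟨le_of_lt ht₀T, le_rfl⟩
      have htd : Tendsto x (nhdsWithin t₀ (Ico (0:ℝ) t₀)) (nhds (x t₀)) :=
        (hxc0 t₀ (le_of_lt ht₀T)).mono_left (nhdsWithin_mono _ Ico_subset_Ici_self)
      exact ge_of_tendsto htd (by
        filter_upwards [self_mem_nhdsWithin] with s hs using (hmin s hs).le)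
    have hxnn : ∀ s ∈ Icc (-τ) t₀, 0 ≤ x s := by
      intro s hs
      rcases lt_or_ge s 0 with h | h
      · exact hxini s ⟨hs.1, h⟩
      · rcases lt_or_eq_of_le hs.2 with h2 | h2
        · exact (hmin s ⟨h, h2⟩).le
        · rw [h2, hxt₀0]
    -- max of δ on [0, t₀]
    obtain ⟨s₀, hs₀, hs₀max⟩ := isCompact_Icc.exists_isMaxOn (α := ℝ)
      (nonempty_Icc.2 ht₀T.le) (hδc.mono (fun s hs => hs.1))
    set M : ℝ := δ s₀ with hM
    have hMb : ∀ s ∈ Icc (0:ℝ) t₀, δ s ≤ M := fun s hs => hs₀max hs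
    -- y = x * exp(M t)
    set y : ℝ → ℝ := fun t => x t * Real.exp (M * t) with hy
    set G : ℝ → ℝ := fun t => (F t + M * x t) * Real.exp (M * t) with hG
    have hyd : ∀ t ∈ Ioo (0:ℝ) t₀, HasDerivWithinAt y (G t) (Ioi t) t := by
      intro t ht
      have hexp : HasDerivAt (fun s => Real.exp (M * s)) (Real.exp (M * t) * M) t := by
        have h1 : HasDerivAt (fun s : ℝ => M * s) M t := by
          simpa using (hasDerivAt_id t).const_mul M
        exact h1.exp
      have := ((hxd t ht.1.le).mono (fun s hs => (le_of_lt (lt_of_le_of_lt ht.1.le hs)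
        : s ∈ Ici (0:ℝ)))).mul hexp.hasDerivWithinAt
      have hGe : ((∑ j, p j t * x (t - τd j t) * Real.exp (-(a j t * x (t - σd j t)))) - δ t * x t)
          * Real.exp (M * t) + x t * (Real.exp (M * t) * M) = G t := by
        simp only [hG, hF]; ring
      exact this.congr_deriv hGe
    have hGnn : ∀ t ∈ Icc (0:ℝ) t₀, 0 ≤ G t := by
      intro t ht
      have hxt : 0 ≤ x t := hxnn t ⟨by linarith [ht.1], ht.2⟩
      have hsum : 0 ≤ ∑ j, p j t * x (t - τd j t) * Real.exp (-(a j t * x (t - σd j t))) := by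
        apply Finset.sum_nonneg
        intro j _
        have hxτ : 0 ≤ x (t - τd j t) :=
          hxnn _ ⟨(hargτ j t ht.1).1, le_trans (hargτ j t ht.1).2 ht.2⟩
        exact mul_nonneg (mul_nonneg ((hp j).2 t ht.1).le hxτ) (Real.exp_pos _).le
      have hδM := hMb t ht
      have : 0 ≤ F t + M * x t := by
        rw [hF]
        simp only
        nlinarith [hsum]
      exact mul_nonneg this (Real.exp_pos _).le
    have hGc : ContinuousOn G (Icc (0:ℝ) t₀) := by
      apply ContinuousOn.mul
      · exact (hFc.add (continuousOn_const.mul hxc0)).mono (fun s hs => hs.1)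
      · exact (Real.continuous_exp.comp (continuous_const.mul continuous_id)).continuousOn
    have hftc : ∫ s in (0:ℝ)..t₀, G s = y t₀ - y 0 := by
      apply intervalIntegral.integral_eq_sub_of_hasDeriv_right_of_le ht₀T.le
      · exact (hxc0.mono (fun s hs => hs.1)).mul
          (Real.continuous_exp.comp (continuous_const.mul continuous_id)).continuousOn
      · exact hyd
      · rw [← uIcc_of_le ht₀T.le] at hGc
        exact hGc.intervalIntegrable
    have hint : 0 ≤ ∫ s in (0:ℝ)..t₀, G s :=
      intervalIntegral.integral_nonneg ht₀T.le (fun s hs => hGnn s hs)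
    have hy0 : y 0 = x 0 := by simp [hy]
    have hyt₀ : y t₀ = 0 := by simp [hy, hxt₀0]
    rw [hftc, hyt₀, hy0] at hint
    linarith
  -- delayed limits
  have hshift : ∀ (g : Fin m → ℝ → ℝ), (∀ j, ∀ t ≥ (0:ℝ), g j t ≤ τ) →
      ∀ j, Tendsto (fun t => x (t - g j t)) atTop (nhds L) := by
    intro g hg j
    apply hL.comp
    have hbase : Tendsto (fun t : ℝ => t - τ) atTop atTop := by
      simpa [sub_eq_add_neg] using tendsto_atTop_add_const_right atTop (-τ) tendsto_id
    apply tendsto_atTop_mono' atTop ?_ hbase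
    filter_upwards [eventually_ge_atTop (0:ℝ)] with t ht
    have := hg j t ht
    show t - τ ≤ t - g j t
    linarith
  have hτlim : ∀ j, Tendsto (fun t => x (t - τd j t)) atTop (nhds L) :=
    hshift τd (fun j t ht => (hτb j t ht).1)
  have hσlim : ∀ j, Tendsto (fun t => x (t - σd j t)) atTop (nhds L) :=
    hshift σd (fun j t ht => (hτb j t ht).2)
  -- eventual domination p ≥ r δ for r < liminf
  have hrδ : ∀ r : ℝ, r < Filter.liminf (fun t => (∑ j, p j t) / δ t) Filter.atTop →
      ∀ᶠ t in atTop, r * δ t < ∑ j, p j t := by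
    intro r hr
    have hbd : Filter.IsBoundedUnder (· ≥ ·) atTop (fun t => (∑ j, p j t) / δ t) := by
      apply isBoundedUnder_of_eventually_ge (a := (0:ℝ))
      filter_upwards [eventually_ge_atTop (0:ℝ)] with t ht
      exact div_nonneg (Finset.sum_nonneg fun j _ => ((hp j).2 t ht).le) (hδpos t ht).le
    have hev := eventually_lt_of_lt_liminf hr hbd
    filter_upwards [hev, eventually_ge_atTop (0:ℝ)] with t h1 h2
    have := hδpos t h2
    rw [lt_div_iff₀ this] at h1
    linarith
  have hL0 : 0 ≤ L := ge_of_tendsto hL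
    (by filter_upwards [eventually_ge_atTop (0:ℝ)] with t ht using (hpos t ht).le)
  -- two-sided eventual closeness
  have hevclose : ∀ ε : ℝ, 0 < ε → ∀ᶠ t in atTop,
      (0 ≤ t) ∧ (∀ j, L - ε < x (t - τd j t) ∧ x (t - τd j t) < L + ε) ∧
      (∀ j, L - ε < x (t - σd j t) ∧ x (t - σd j t) < L + ε) ∧
      (L - ε < x t ∧ x t < L + ε) ∧ δ t < ∑ j, p j t := by
    intro ε hε
    have h1 : ∀ᶠ t in atTop, ∀ j, L - ε < x (t - τd j t) ∧ x (t - τd j t) < L + ε :=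
      eventually_all.2 fun j => ((hτlim j).eventually_const_lt (by linarith)).and
        ((hτlim j).eventually_lt_const (by linarith))
    have h2 : ∀ᶠ t in atTop, ∀ j, L - ε < x (t - σd j t) ∧ x (t - σd j t) < L + ε :=
      eventually_all.2 fun j => ((hσlim j).eventually_const_lt (by linarith)).and
        ((hσlim j).eventually_lt_const (by linarith))
    have h3 : ∀ᶠ t in atTop, L - ε < x t ∧ x t < L + ε :=
      (hL.eventually_const_lt (by linarith)).and (hL.eventually_lt_const (by linarith))
    have h4 : ∀ᶠ t in atTop, δ t < ∑ j, p j t := by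
      have := hrδ 1 hA1.1
      filter_upwards [this] with t ht
      linarith
    filter_upwards [eventually_ge_atTop (0:ℝ), h1, h2, h3, h4] with t q0 q1 q2 q3 q4
    exact ⟨q0, q1, q2, q3, q4⟩
  rcases lt_trichotomy L K with hLK | hLK | hLK
  · -- L < K
    rcases hL0.lt_or_eq with hLpos | hLzero
    · -- 0 < L < K : solution must blow up to +∞
      exfalso
      obtain ⟨d, hd0, hd2⟩ : ∃ d : ℝ, 0 < d ∧ d + d = K - L :=
        ⟨(K - L)/2, by linarith, by ring⟩
      have hecd : (1:ℝ) < Real.exp (c*d) := by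
        have := Real.add_one_le_exp (c*d)
        nlinarith [mul_pos hc0 hd0]
      obtain ⟨η, hη0, hq⟩ : ∃ η : ℝ, 0 < η ∧
          η = L * (Real.exp (-(C*K)) * (Real.exp (c*d) - 1)) :=
        ⟨_, mul_pos hLpos (mul_pos (Real.exp_pos _) (by linarith)), rfl⟩
      obtain ⟨ε, hε0, hεd, hεη, hεL⟩ : ∃ ε : ℝ, 0 < ε ∧ ε ≤ d ∧ ε ≤ η/4 ∧ ε ≤ L :=
        ⟨min (min d (η/4)) L, lt_min (lt_min hd0 (by linarith)) hLpos,
          le_trans (min_le_left _ _) (min_le_left _ _),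
          le_trans (min_le_left _ _) (min_le_right _ _), min_le_right _ _⟩
      obtain ⟨T, hT⟩ := eventually_atTop.1 (hevclose ε hε0)
      obtain ⟨T', hT'0, hT'T⟩ : ∃ T' : ℝ, 0 ≤ T' ∧ T ≤ T' :=
        ⟨max T 0, le_max_right _ _, le_max_left _ _⟩
      have hFb : ∀ t ≥ T', η/2 * δ t ≤ F t := by
        intro t ht
        have ht0 : (0:ℝ) ≤ t := le_trans hT'0 ht
        obtain ⟨-, h1, h2, h3, h4⟩ := hT t (le_trans hT'T ht)
        have hterm : ∀ j : Fin m, p j t * (η/2) ≤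
            p j t * x (t - τd j t) * Real.exp (-(a j t * x (t - σd j t)))
              - p j t * Real.exp (-(a j t * K)) * x t := by
          intro j
          obtain ⟨hcj, hCj⟩ := hca j t ht0
          have hp' : 0 < p j t := (hp j).2 t ht0
          have haj0 : 0 < a j t := lt_of_lt_of_le hc0 hcj
          have hgap := nich_gap2 (aa := a j t) (c := c) (C := C) (K := K) (M := L + ε)
            hc0.le hcj hCj (by linarith) (by linarith)
          have hE1 : Real.exp (-(a j t * (L + ε))) ≤ Real.exp (-(a j t * x (t - σd j t))) :=
            Real.exp_le_exp.2 (neg_le_neg (mul_le_mul_of_nonneg_left (h2 j).2.le haj0.le))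
          have hA : (L - ε) * Real.exp (-(a j t * (L + ε))) ≤
              x (t - τd j t) * Real.exp (-(a j t * x (t - σd j t))) :=
            mul_le_mul (h1 j).1.le hE1 (Real.exp_pos _).le (by linarith [(h1 j).1])
          have hB : Real.exp (-(a j t * K)) * x t ≤ Real.exp (-(a j t * K)) * (L + ε) :=
            mul_le_mul_of_nonneg_left h3.2.le (Real.exp_pos _).le
          have hsc : η/2 ≤ (L - ε) * Real.exp (-(a j t * (L + ε)))
              - Real.exp (-(a j t * K)) * (L + ε) := by
            set E1 := Real.exp (-(a j t * (L+ε))) with hE1d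
            set E2 := Real.exp (-(a j t * K)) with hE2d
            have h11 : E1 ≤ 1 :=
              Real.exp_le_one_iff.2 (neg_nonpos.2 (mul_nonneg haj0.le (by linarith)))
            have h12 : E2 ≤ 1 :=
              Real.exp_le_one_iff.2 (neg_nonpos.2 (mul_nonneg haj0.le hKpos.le))
            have hE1nn : (0:ℝ) ≤ E1 := (Real.exp_pos _).le
            have hE2nn : (0:ℝ) ≤ E2 := (Real.exp_pos _).le
            have hgap2 : Real.exp (-(C*K)) * (Real.exp (c*d) - 1) ≤ E1 - E2 := by
              refine le_trans ?_ hgap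
              apply mul_le_mul_of_nonneg_left ?_ (Real.exp_pos _).le
              have hm1 : c * d ≤ c * (K - (L + ε)) :=
                mul_le_mul_of_nonneg_left (by linarith) hc0.le
              have := Real.exp_le_exp.2 hm1
              linarith
            have hLg : L * (Real.exp (-(C*K)) * (Real.exp (c*d) - 1)) ≤ L * (E1 - E2) :=
              mul_le_mul_of_nonneg_left hgap2 hLpos.le
            have q1 : ε * E1 ≤ ε * 1 := mul_le_mul_of_nonneg_left h11 hε0.le
            have q2 : ε * E2 ≤ ε * 1 := mul_le_mul_of_nonneg_left h12 hε0.le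
            have expand : (L - ε) * E1 - E2 * (L + ε) =
                L * (E1 - E2) - (ε * E1 + ε * E2) := by ring
            rw [mul_one] at q1 q2
            linarith [hLg, q1, q2]
          have hmain : η/2 ≤ x (t - τd j t) * Real.exp (-(a j t * x (t - σd j t)))
              - Real.exp (-(a j t * K)) * x t := by linarith
          have hmul := mul_le_mul_of_nonneg_left hmain hp'.le
          have expand2 : p j t * (x (t - τd j t) * Real.exp (-(a j t * x (t - σd j t)))
              - Real.exp (-(a j t * K)) * x t) =
              p j t * x (t - τd j t) * Real.exp (-(a j t * x (t - σd j t)))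
                - p j t * Real.exp (-(a j t * K)) * x t := by ring
          linarith
        have hδx : δ t * x t = ∑ j, p j t * Real.exp (-(a j t * K)) * x t := by
          rw [hK1 t ht0, Finset.sum_mul]
        have hFeq : F t = ∑ j, (p j t * x (t - τd j t) * Real.exp (-(a j t * x (t - σd j t)))
            - p j t * Real.exp (-(a j t * K)) * x t) := by
          rw [hF]
          simp only
          rw [hδx, ← Finset.sum_sub_distrib]
        rw [hFeq]
        have hs1 : (∑ j, p j t) * (η/2) ≤ ∑ j, (p j t * x (t - τd j t) *
            Real.exp (-(a j t * x (t - σd j t))) - p j t * Real.exp (-(a j t * K)) * x t) := by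
          rw [Finset.sum_mul]
          exact Finset.sum_le_sum fun j _ => hterm j
        have hs2 : δ t * (η/2) ≤ (∑ j, p j t) * (η/2) :=
          mul_le_mul_of_nonneg_right h4.le (by linarith)
        linarith
      exact nich_blowup hxc0 hFc hδc hxd hA3 (by linarith) hT'0 hFb hL
    · -- L = 0 : persistence contradiction
      exfalso
      have hLz : L = 0 := hLzero.symm
      obtain ⟨r, hr1, hr2⟩ : ∃ r : ℝ, 1 < r ∧
          r < Filter.liminf (fun t => (∑ j, p j t) / δ t) Filter.atTop :=
        ⟨(1 + Filter.liminf (fun t => (∑ j, p j t) / δ t) Filter.atTop)/2,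
          by have := hA1.1; linarith, by have := hA1.1; linarith⟩
      obtain ⟨ρ, hρ1, hρρ⟩ : ∃ ρ : ℝ, 1 < ρ ∧ ρ * ρ = r := by
        refine ⟨Real.sqrt r, ?_, Real.mul_self_sqrt (by linarith)⟩
        rw [show (1:ℝ) = Real.sqrt 1 by rw [Real.sqrt_one]]
        exact Real.sqrt_lt_sqrt zero_le_one hr1
      have hρ0 : 0 < ρ := by linarith
      obtain ⟨ε, hε0, hεlog⟩ : ∃ ε : ℝ, 0 < ε ∧ C * ε = Real.log ρ := by
        refine ⟨Real.log ρ / C, div_pos (Real.log_pos hρ1) hC0, ?_⟩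
        field_simp
      have hexpb : ∀ u : ℝ, 0 ≤ u → u ≤ ε → ∀ aa : ℝ, c ≤ aa → aa ≤ C →
          1/ρ ≤ Real.exp (-(aa * u)) := by
        intro u hu huε aa ha1 ha2
        have e1 : aa * u ≤ C * u := mul_le_mul_of_nonneg_right ha2 hu
        have e2 : C * u ≤ C * ε := mul_le_mul_of_nonneg_left huε hC0.le
        have h1 : aa * u ≤ Real.log ρ := by linarith
        calc 1/ρ = Real.exp (-Real.log ρ) := by
              rw [Real.exp_neg, Real.exp_log hρ0, one_div]
          _ ≤ Real.exp (-(aa*u)) := Real.exp_le_exp.2 (by linarith)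
      have hev : ∀ᶠ t in atTop, (∀ j, x (t - σd j t) ≤ ε) ∧ r * δ t < ∑ j, p j t := by
        refine (eventually_all.2 fun j => ?_).and (hrδ r hr2)
        have hσ0 : Tendsto (fun t => x (t - σd j t)) atTop (nhds 0) := by
          rw [← hLz]; exact hσlim j
        exact hσ0.eventually (eventually_le_nhds hε0)
      obtain ⟨T₀, hT₀⟩ := eventually_atTop.1 hev
      obtain ⟨T, hTT₀, hTτ, hT0⟩ : ∃ T : ℝ, T₀ ≤ T ∧ τ ≤ T ∧ 0 ≤ T :=
        ⟨max T₀ τ, le_max_left _ _, le_max_right _ _, le_trans hτ0 (le_max_right _ _)⟩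
      obtain ⟨z, hz, hzmin⟩ := isCompact_Icc.exists_isMinOn
        (nonempty_Icc.2 (by linarith : T ≤ T + τ))
        (hxc0.mono (fun s hs => le_trans hT0 hs.1))
      have hα0 : 0 < x z := hpos z (le_trans hT0 hz.1)
      have hxT : x z / 2 < x T := by
        have := hzmin (⟨le_rfl, by linarith⟩ : T ∈ Icc T (T+τ))
        have h2 : x z ≤ x T := this
        linarith
      have hex : ∃ t, T ≤ t ∧ x t ≤ x z / 2 := by
        have hL' : Tendsto x atTop (nhds 0) := by rw [← hLz]; exact hL
        have h1 : ∀ᶠ t in atTop, x t < x z / 2 := hL'.eventually_lt_const (by linarith)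
        obtain ⟨t, ht1, ht2⟩ := ((eventually_ge_atTop T).and h1).exists
        exact ⟨t, ht1, ht2.le⟩
      obtain ⟨ts, htsT, hxts, hmins⟩ :=
        first_crossing (hxc0.mono (Ici_subset_Ici.2 hT0)) hxT hex
      have hts0 : 0 < ts := lt_of_le_of_lt hT0 htsT
      have htsτ : T + τ < ts := by
        by_contra hcon
        push_neg at hcon
        have h1 : x z ≤ x ts := hzmin ⟨htsT.le, hcon⟩
        linarith
      have hwin : ∀ s ∈ Icc T ts, x ts ≤ x s := by
        intro s hs
        rcases lt_or_eq_of_le hs.2 with h | h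
        · exact le_trans hxts (hmins s ⟨hs.1, h⟩).le
        · rw [h]
      have hxtspos : 0 < x ts := hpos ts hts0.le
      obtain ⟨hσε, hpδ⟩ := hT₀ ts (by linarith)
      have hFpos : 0 < F ts := by
        have hterm : ∀ j : Fin m, p j ts * (x ts * (1/ρ)) ≤
            p j ts * x (ts - τd j ts) * Real.exp (-(a j ts * x (ts - σd j ts))) := by
          intro j
          have hp' : 0 < p j ts := (hp j).2 _ hts0.le
          have hτj := (hτb j ts hts0.le).1
          have hτj0 := ((hdel j).2.2.1 ts hts0.le).1
          have hxτ : x ts ≤ x (ts - τd j ts) := hwin _ ⟨by linarith, by linarith⟩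
          have hσj := (hτb j ts hts0.le).2
          have hσj0 := ((hdel j).2.2.1 ts hts0.le).2
          have hσarg0 : 0 ≤ ts - σd j ts := by linarith
          have hE := hexpb (x (ts - σd j ts)) (hpos _ hσarg0).le (hσε j) (a j ts)
            (hca j ts hts0.le).1 (hca j ts hts0.le).2
          have hxτ0 : 0 ≤ x (ts - τd j ts) := (hpos _ (by linarith)).le
          have step : x ts * (1/ρ) ≤ x (ts - τd j ts) *
              Real.exp (-(a j ts * x (ts - σd j ts))) :=
            mul_le_mul hxτ hE (by positivity) hxτ0
          have hmul := mul_le_mul_of_nonneg_left step hp'.le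
          have expand : p j ts * (x (ts - τd j ts) *
              Real.exp (-(a j ts * x (ts - σd j ts)))) =
              p j ts * x (ts - τd j ts) * Real.exp (-(a j ts * x (ts - σd j ts))) := by ring
          linarith
        have hsum : (∑ j, p j ts) * (x ts * (1/ρ)) ≤
            ∑ j, p j ts * x (ts - τd j ts) * Real.exp (-(a j ts * x (ts - σd j ts))) := by
          rw [Finset.sum_mul]
          exact Finset.sum_le_sum fun j _ => hterm j
        have hδt : 0 < δ ts := hδpos _ hts0.le
        have h5 : r * δ ts * (x ts * (1/ρ)) ≤ (∑ j, p j ts) * (x ts * (1/ρ)) :=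
          mul_le_mul_of_nonneg_right hpδ.le (mul_nonneg hxtspos.le (by positivity))
        have h6 : r * δ ts * (x ts * (1/ρ)) = ρ * (δ ts * x ts) := by
          rw [← hρρ]; field_simp
        have h7 : 0 < (ρ - 1) * (δ ts * x ts) :=
          mul_pos (by linarith) (mul_pos hδt hxtspos)
        have h8 : (ρ - 1) * (δ ts * x ts) = ρ * (δ ts * x ts) - δ ts * x ts := by ring
        rw [hF]
        simp only
        linarith
      have hFat : ContinuousAt F ts := hFc.continuousAt (Ici_mem_nhds hts0)
      have hevF : ∀ᶠ s in nhds ts, 0 < F s := hFat.eventually (eventually_gt_nhds hFpos)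
      obtain ⟨h₀, hh₀, hball⟩ := Metric.eventually_nhds_iff.1 hevF
      obtain ⟨h, hh0, hhle1, hhle2⟩ : ∃ h : ℝ, 0 < h ∧ h ≤ h₀/2 ∧ h ≤ ts - T :=
        ⟨min (h₀/2) (ts - T), lt_min (by linarith) (by linarith),
          min_le_left _ _, min_le_right _ _⟩
      have huT : T ≤ ts - h := by linarith
      have hu0 : 0 ≤ ts - h := le_trans hT0 huT
      have hut : ts - h < ts := by linarith
      have hFnn : ∀ s ∈ Icc (ts - h) ts, 0 ≤ F s := by
        intro s hs
        apply (hball ?_).le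
        rw [Real.dist_eq, abs_lt]
        have h1 := hs.1
        have h2 := hs.2
        constructor <;> linarith
      have hint : 0 ≤ ∫ s in (ts - h)..ts, F s :=
        intervalIntegral.integral_nonneg hut.le hFnn
      have hftc := nich_ftc hxc0 hFc hxd hu0 hut.le
      rw [hftc] at hint
      have hxu : x z / 2 < x (ts - h) := hmins (ts - h) ⟨huT, hut⟩
      linarith
  · exact hLK
  · -- K < L : solution must blow up to -∞
    exfalso
    have hLpos : 0 < L := lt_trans hKpos hLK
    obtain ⟨d, hd0, hd2⟩ : ∃ d : ℝ, 0 < d ∧ d + d = L - K :=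
      ⟨(L - K)/2, by linarith, by ring⟩
    have hecd : Real.exp (-(c*d)) < 1 := by
      rw [Real.exp_lt_one_iff]
      nlinarith [mul_pos hc0 hd0]
    obtain ⟨η, hη0, hq⟩ : ∃ η : ℝ, 0 < η ∧
        η = L * (Real.exp (-(C*K)) * (1 - Real.exp (-(c*d)))) :=
      ⟨_, mul_pos hLpos (mul_pos (Real.exp_pos _) (by linarith)), rfl⟩
    obtain ⟨ε, hε0, hεd, hεη⟩ : ∃ ε : ℝ, 0 < ε ∧ ε ≤ d ∧ ε ≤ η/4 :=
      ⟨min d (η/4), lt_min hd0 (by linarith), min_le_left _ _, min_le_right _ _⟩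
    obtain ⟨T, hT⟩ := eventually_atTop.1 (hevclose ε hε0)
    obtain ⟨T', hT'0, hT'T⟩ : ∃ T' : ℝ, 0 ≤ T' ∧ T ≤ T' :=
      ⟨max T 0, le_max_right _ _, le_max_left _ _⟩
    have hFb : ∀ t ≥ T', η/2 * δ t ≤ -F t := by
      intro t ht
      have ht0 : (0:ℝ) ≤ t := le_trans hT'0 ht
      obtain ⟨-, h1, h2, h3, h4⟩ := hT t (le_trans hT'T ht)
      have hterm : ∀ j : Fin m,
          p j t * x (t - τd j t) * Real.exp (-(a j t * x (t - σd j t)))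
            - p j t * Real.exp (-(a j t * K)) * x t ≤ p j t * (-(η/2)) := by
        intro j
        obtain ⟨hcj, hCj⟩ := hca j t ht0
        have hp' : 0 < p j t := (hp j).2 t ht0
        have haj0 : 0 < a j t := lt_of_lt_of_le hc0 hcj
        have hgap := nich_gap1 (aa := a j t) (c := c) (C := C) (K := K) (M := L - ε)
          hc0.le hcj hCj hKpos.le (by linarith)
        have hE1 : Real.exp (-(a j t * x (t - σd j t))) ≤ Real.exp (-(a j t * (L - ε))) :=
          Real.exp_le_exp.2 (neg_le_neg (mul_le_mul_of_nonneg_left (h2 j).1.le haj0.le))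
        have hA : x (t - τd j t) * Real.exp (-(a j t * x (t - σd j t))) ≤
            (L + ε) * Real.exp (-(a j t * (L - ε))) :=
          mul_le_mul (h1 j).2.le hE1 (Real.exp_pos _).le (by linarith)
        have hB : Real.exp (-(a j t * K)) * (L - ε) ≤ Real.exp (-(a j t * K)) * x t :=
          mul_le_mul_of_nonneg_left h3.1.le (Real.exp_pos _).le
        have hsc : (L + ε) * Real.exp (-(a j t * (L - ε)))
            - Real.exp (-(a j t * K)) * (L - ε) ≤ -(η/2) := by
          set E1 := Real.exp (-(a j t * (L-ε))) with hE1d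
          set E2 := Real.exp (-(a j t * K)) with hE2d
          have h11 : E1 ≤ 1 :=
            Real.exp_le_one_iff.2 (neg_nonpos.2 (mul_nonneg haj0.le (by linarith)))
          have h12 : E2 ≤ 1 :=
            Real.exp_le_one_iff.2 (neg_nonpos.2 (mul_nonneg haj0.le hKpos.le))
          have hgap2 : Real.exp (-(C*K)) * (1 - Real.exp (-(c*d))) ≤ E2 - E1 := by
            refine le_trans ?_ hgap
            apply mul_le_mul_of_nonneg_left ?_ (Real.exp_pos _).le
            have hm1 : -(c * ((L - ε) - K)) ≤ -(c*d) :=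
              neg_le_neg (mul_le_mul_of_nonneg_left (by linarith) hc0.le)
            have := Real.exp_le_exp.2 hm1
            linarith
          have hLg : L * (Real.exp (-(C*K)) * (1 - Real.exp (-(c*d)))) ≤ L * (E2 - E1) :=
            mul_le_mul_of_nonneg_left hgap2 hLpos.le
          have q1 : ε * E1 ≤ ε * 1 := mul_le_mul_of_nonneg_left h11 hε0.le
          have q2 : ε * E2 ≤ ε * 1 := mul_le_mul_of_nonneg_left h12 hε0.le
          have expand : (L + ε) * E1 - E2 * (L - ε) =
              -(L * (E2 - E1)) + (ε * E1 + ε * E2) := by ring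
          rw [mul_one] at q1 q2
          linarith [hLg, q1, q2]
        have hmain : x (t - τd j t) * Real.exp (-(a j t * x (t - σd j t)))
            - Real.exp (-(a j t * K)) * x t ≤ -(η/2) := by linarith
        have hmul := mul_le_mul_of_nonneg_left hmain hp'.le
        have expand2 : p j t * (x (t - τd j t) * Real.exp (-(a j t * x (t - σd j t)))
            - Real.exp (-(a j t * K)) * x t) =
            p j t * x (t - τd j t) * Real.exp (-(a j t * x (t - σd j t)))
              - p j t * Real.exp (-(a j t * K)) * x t := by ring
        linarith
      have hδx : δ t * x t = ∑ j, p j t * Real.exp (-(a j t * K)) * x t := by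
        rw [hK1 t ht0, Finset.sum_mul]
      have hFeq : F t = ∑ j, (p j t * x (t - τd j t) * Real.exp (-(a j t * x (t - σd j t)))
          - p j t * Real.exp (-(a j t * K)) * x t) := by
        rw [hF]
        simp only
        rw [hδx, ← Finset.sum_sub_distrib]
      have hs1 : ∑ j, (p j t * x (t - τd j t) * Real.exp (-(a j t * x (t - σd j t)))
          - p j t * Real.exp (-(a j t * K)) * x t) ≤ (∑ j, p j t) * (-(η/2)) := by
        rw [Finset.sum_mul]
        exact Finset.sum_le_sum fun j _ => hterm j
      have hs2 : (∑ j, p j t) * (-(η/2)) ≤ δ t * (-(η/2)) :=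
        mul_le_mul_of_nonpos_right h4.le (by linarith)
      rw [hFeq]
      linarith [hs1, hs2]
    exact nich_blowup (L := -L) (hxc0.neg) (hFc.neg) hδc
      (fun t ht => (hxd t ht).neg) hA3 (by linarith) hT'0 hFb hL.neg
end
end
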